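/- arXiv:2009.00179 — 15 statements merged into one kernel-verified Lean document; each statement's English description precedes it below -/
import Mathlib

section
/- Let x ≥ y ≥ z be real numbers, let a, b, c be real numbers with a ≥ 0, c ≥ 0 and a + c ≥ |b|, and let g be a function in class 𝒢. Then a·g(x−y)·g(x−z) + b·g(y−z)·g(y−x) + c·g(z−x)·g(z−y) ≥ 0. -/
/-- A function `g : ℝ → ℝ` is in class 𝒢 if it is either even or odd,
`g 0 ≥ 0`, and `g` is monotonically nondecreasing on `[0, ∞)`. -/
def ClassG (g : ℝ → ℝ) : Prop :=
  ((∀ x, g (-x) = g x) ∨ (∀ x, g (-x) = -g x)) ∧ 0 ≤ g 0 ∧ MonotoneOn g (Set.Ici 0)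

lemma key_aux (a b c p q r : ℝ) (ha : 0 ≤ a) (hc : 0 ≤ c) (hb : |b| ≤ a + c)
    (hp : 0 ≤ p) (hq : 0 ≤ q) (hpr : p ≤ r) (hqr : q ≤ r) :
    0 ≤ a * p * r + b * q * p + c * r * q := by
  have h1 : -(a + c) ≤ b := neg_le_of_abs_le hb
  nlinarith [mul_nonneg hp (sub_nonneg.2 hqr), mul_nonneg hq (sub_nonneg.2 hpr),
    mul_nonneg ha (mul_nonneg hp (sub_nonneg.2 hqr)),
    mul_nonneg hc (mul_nonneg hq (sub_nonneg.2 hpr)),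
    mul_nonneg hp hq]

theorem stmt_0 (x y z a b c : ℝ) (hxy : y ≤ x) (hyz : z ≤ y)
    (ha : 0 ≤ a) (hc : 0 ≤ c) (hb : |b| ≤ a + c)
    (g : ℝ → ℝ) (hg : ClassG g) :
    0 ≤ a * g (x - y) * g (x - z) + b * g (y - z) * g (y - x)
      + c * g (z - x) * g (z - y) := by
  obtain ⟨hpar, hg0, hmono⟩ := hg
  set u := x - y with hu
  set v := y - z with hv
  have hu0 : 0 ≤ u := by simp [hu]; linarith
  have hv0 : 0 ≤ v := by simp [hv]; linarith
  have huv0 : 0 ≤ u + v := by linarith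
  have hgu : 0 ≤ g u := le_trans hg0 (hmono (by simp) (by simpa using hu0) hu0)
  have hgv : 0 ≤ g v := le_trans hg0 (hmono (by simp) (by simpa using hv0) hv0)
  have hpr : g u ≤ g (u + v) := hmono (by simpa using hu0) (by simpa using huv0) (by linarith)
  have hqr : g v ≤ g (u + v) := hmono (by simpa using hv0) (by simpa using huv0) (by linarith)
  have e1 : x - z = u + v := by simp [hu, hv]
  have e2 : y - x = -u := by simp [hu]
  have e3 : z - x = -(u + v) := by simp [hu, hv]
  have e4 : z - y = -v := by simp [hv]
  rw [e1, e2, e3, e4]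
  rcases hpar with he | ho
  · rw [he u, he (u + v), he v]
    have := key_aux a b c (g u) (g v) (g (u + v)) ha hc hb hgu hgv hpr hqr
    linarith [this]
  · rw [ho u, ho (u + v), ho v]
    have hb' : |(-b)| ≤ a + c := by rwa [abs_neg]
    have := key_aux a (-b) c (g u) (g v) (g (u + v)) ha hc hb' hgu hgv hpr hqr
    linarith [this]
end

section
/- Let x₁ ≥ x₂ ≥ x₃ ≥ x₄ be real numbers such that x₁ + x₄ ≥ x₂ + x₃, let a₁, a₂, a₃, a₄ be real numbers with a₁ ≥ max(|a₂|, |a₄|) and a₃ ≥ |a₄|, and let g be a function in class 𝒢. Then ∑_{i=1}^{4} a_i · ∏_{j ≠ i} g(x_i − x_j) ≥ 0. -/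
theorem stmt_1 (x a : Fin 4 → ℝ) (hx : ∀ i j : Fin 4, i ≤ j → x j ≤ x i)
    (hsum : x 1 + x 2 ≤ x 0 + x 3)
    (ha1 : max |a 1| |a 3| ≤ a 0) (ha3 : |a 3| ≤ a 2)
    (g : ℝ → ℝ) (hg : ClassG g) :
    0 ≤ ∑ i, a i * ∏ j ∈ Finset.univ.erase i, g (x i - x j) := by
  obtain ⟨hpar, hg0, hmono⟩ := hg
  have h0 : Finset.univ.erase (0:Fin 4) = {1,2,3} := by decide
  have h1 : Finset.univ.erase (1:Fin 4) = {0,2,3} := by decide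
  have h2 : Finset.univ.erase (2:Fin 4) = {0,1,3} := by decide
  have h3 : Finset.univ.erase (3:Fin 4) = {0,1,2} := by decide
  rw [Fin.sum_univ_four, h0, h1, h2, h3]
  rw [show ({1,2,3} : Finset (Fin 4)) = insert 1 {2,3} from rfl,
      show ({0,2,3} : Finset (Fin 4)) = insert 0 {2,3} from rfl,
      show ({0,1,3} : Finset (Fin 4)) = insert 0 {1,3} from rfl,
      show ({0,1,2} : Finset (Fin 4)) = insert 0 {1,2} from rfl]
  rw [Finset.prod_insert (by decide), Finset.prod_insert (by decide), Finset.prod_singleton,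
      Finset.prod_insert (by decide), Finset.prod_insert (by decide), Finset.prod_singleton,
      Finset.prod_insert (by decide), Finset.prod_insert (by decide), Finset.prod_singleton,
      Finset.prod_insert (by decide), Finset.prod_insert (by decide), Finset.prod_singleton]
  -- ordering facts
  have h01 : x 1 ≤ x 0 := hx 0 1 (by decide)
  have h12 : x 2 ≤ x 1 := hx 1 2 (by decide)
  have h23 : x 3 ≤ x 2 := hx 2 3 (by decide)
  -- basic g facts
  have gmono : ∀ s t : ℝ, 0 ≤ s → s ≤ t → g s ≤ g t := fun s t hs hst =>
    hmono (Set.mem_Ici.mpr hs) (Set.mem_Ici.mpr (hs.trans hst)) hst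
  have gnn : ∀ t : ℝ, 0 ≤ t → 0 ≤ g t := fun t ht => hg0.trans (gmono 0 t le_rfl ht)
  -- rewrite negative arguments
  rw [show x 1 - x 0 = -(x 0 - x 1) by ring, show x 2 - x 0 = -(x 0 - x 2) by ring,
      show x 2 - x 1 = -(x 1 - x 2) by ring, show x 3 - x 0 = -(x 0 - x 3) by ring,
      show x 3 - x 1 = -(x 1 - x 3) by ring, show x 3 - x 2 = -(x 2 - x 3) by ring]
  set A := g (x 0 - x 1) with hA
  set B := g (x 1 - x 2) with hB
  set C := g (x 2 - x 3) with hC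
  set D := g (x 0 - x 2) with hD
  set E := g (x 1 - x 3) with hE
  set F := g (x 0 - x 3) with hF
  have hAnn : 0 ≤ A := gnn _ (by linarith)
  have hBnn : 0 ≤ B := gnn _ (by linarith)
  have hCnn : 0 ≤ C := gnn _ (by linarith)
  have hDnn : 0 ≤ D := gnn _ (by linarith)
  have hEnn : 0 ≤ E := gnn _ (by linarith)
  have hFnn : 0 ≤ F := gnn _ (by linarith)
  have hED : E ≤ D := gmono _ _ (by linarith) (by linarith)
  have hCA : C ≤ A := gmono _ _ (by linarith) (by linarith)
  have hBF : B ≤ F := gmono _ _ (by linarith) (by linarith)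
  have hAD : A ≤ D := gmono _ _ (by linarith) (by linarith)
  have hDF : D ≤ F := gmono _ _ (by linarith) (by linarith)
  have hBE : B ≤ E := gmono _ _ (by linarith) (by linarith)
  -- key inequality : P0 + P2 ≥ |P1| + |P3|
  have key : A * B * E + F * E * C ≤ A * D * F + D * B * C := by
    nlinarith [mul_nonneg (sub_nonneg.2 hED) (add_nonneg (mul_nonneg hAnn hFnn) (mul_nonneg hBnn hCnn)),
      mul_nonneg hEnn (mul_nonneg (sub_nonneg.2 hCA) (sub_nonneg.2 hBF))]
  set m := max |a 1| |a 3| with hm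
  have hm0 : 0 ≤ m := le_trans (abs_nonneg _) (le_max_left _ _)
  have hm1 : |a 1| ≤ m := le_max_left _ _
  have hm3 : |a 3| ≤ m := le_max_right _ _
  have ha1l := abs_le.mp hm1
  have ha3l := abs_le.mp hm3
  have ha2l := abs_le.mp ha3
  have ha0 : m ≤ a 0 := ha1
  have hP3P2 : D * B * C ≤ F * E * C := by
    have h1 : D * B ≤ F * E := mul_le_mul hDF hBE hBnn hFnn
    exact mul_le_mul_of_nonneg_right h1 hCnn
  have main : ∀ b1 b3 : ℝ, -m ≤ b1 → -m ≤ b3 → -a 2 ≤ b3 →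
      0 ≤ a 0 * (A * D * F) + b1 * (A * B * E) + a 2 * (D * B * C) + b3 * (F * E * C) := by
    intro b1 b3 hb1 hb3 hb3'
    have t1 : 0 ≤ (a 0 - m) * (A * D * F) := mul_nonneg (by linarith) (by positivity)
    have t2 : 0 ≤ (b1 + m) * (A * B * E) := mul_nonneg (by linarith) (by positivity)
    have t3 : 0 ≤ (a 2 + b3) * (D * B * C) := mul_nonneg (by linarith) (by positivity)
    have t4 : 0 ≤ (b3 + m) * (F * E * C - D * B * C) :=
      mul_nonneg (by linarith) (by linarith)
    have t5 : 0 ≤ m * (A * D * F + D * B * C - A * B * E - F * E * C) :=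
      mul_nonneg hm0 (by linarith)
    linarith [t1, t2, t3, t4, t5]
  rcases hpar with heven | hodd
  · simp only [heven]
    rw [← hA, ← hB, ← hC, ← hD, ← hE, ← hF]
    have h := main (a 1) (a 3) (by linarith) (by linarith) (by linarith)
    ring_nf at h ⊢
    linarith [h]
  · simp only [hodd]
    rw [← hA, ← hB, ← hC, ← hD, ← hE, ← hF]
    have h := main (-(a 1)) (-(a 3)) (by linarith) (by linarith) (by linarith)
    ring_nf at h ⊢
    linarith [h]
end

section
/- Let x₁ ≥ x₂ ≥ x₃ ≥ x₄ ≥ x₅ be real numbers such that x₁ + x₄ ≥ x₂ + x₃, let a₁, a₂, a₃, a₄, a₅ be real numbers with a₁ ≥ max(|a₂|, |a₄| − a₅), a₃ ≥ 0, a₅ ≥ 0, and a₃ + a₅ ≥ |a₄|, and let g be a function in class 𝒢. Then ∑_{i=1}^{5} a_i · ∏_{j ≠ i} g(x_i − x_j) ≥ 0. -/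
private lemma aux_main (a0 a1 a2 a3 a4 Q0 Q1 Q2 Q3 Q4 : ℝ)
    (hQ1 : 0 ≤ Q1) (hQ2 : 0 ≤ Q2) (hQ3 : 0 ≤ Q3)
    (h01 : Q1 ≤ Q0) (h34 : Q3 ≤ Q4) (hk : Q1 + Q3 ≤ Q0 + Q2)
    (ha1 : |a1| ≤ a0) (ha34 : |a3| - a4 ≤ a0)
    (ha2 : 0 ≤ a2) (ha4 : 0 ≤ a4) (ha35 : |a3| ≤ a2 + a4) :
    0 ≤ a0*Q0 + a1*Q1 + a2*Q2 + a3*Q3 + a4*Q4 := by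
  have ha0 : 0 ≤ a0 := le_trans (abs_nonneg a1) ha1
  have hn1 : -a0 ≤ a1 := by have := neg_abs_le a1; linarith
  have hn3 : -|a3| ≤ a3 := neg_abs_le a3
  have hp1 : 0 ≤ (a1 + a0) * Q1 := mul_nonneg (by linarith) hQ1
  have hp3 : 0 ≤ (a3 + |a3|) * Q3 := mul_nonneg (by linarith) hQ3
  rcases le_or_gt |a3| a4 with h | h
  · linarith [mul_nonneg ha0 (sub_nonneg.2 h01), mul_nonneg ha2 hQ2,
      mul_nonneg ha4 (sub_nonneg.2 h34), mul_nonneg (sub_nonneg.2 h) hQ3, hp1, hp3]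
  · linarith [mul_nonneg (by linarith : (0:ℝ) ≤ a0 - (|a3| - a4)) (sub_nonneg.2 h01),
      mul_nonneg (by linarith : (0:ℝ) ≤ a2 - (|a3| - a4)) hQ2,
      mul_nonneg (by linarith : (0:ℝ) ≤ |a3| - a4)
        (by linarith : (0:ℝ) ≤ Q0 + Q2 - Q1 - Q3),
      mul_nonneg ha4 (sub_nonneg.2 h34), hp1, hp3]

theorem stmt_2 (x a : Fin 5 → ℝ) (hx : ∀ i j : Fin 5, i ≤ j → x j ≤ x i)
    (hsum : x 1 + x 2 ≤ x 0 + x 3)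
    (ha1 : max |a 1| (|a 3| - a 4) ≤ a 0)
    (ha3 : 0 ≤ a 2) (ha5 : 0 ≤ a 4) (ha35 : |a 3| ≤ a 2 + a 4)
    (g : ℝ → ℝ) (hg : ClassG g) :
    0 ≤ ∑ i, a i * ∏ j ∈ Finset.univ.erase i, g (x i - x j) := by
  obtain ⟨hpar, hg0, hmono⟩ := hg
  have gle : ∀ s t : ℝ, 0 ≤ s → s ≤ t → g s ≤ g t :=
    fun s t hs hst => hmono hs (le_trans hs hst) hst
  have gnn : ∀ t : ℝ, 0 ≤ t → 0 ≤ g t := fun t ht => le_trans hg0 (gle 0 t le_rfl ht)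
  -- order facts
  have h01 : x 1 ≤ x 0 := hx 0 1 (by decide)
  have h12 : x 2 ≤ x 1 := hx 1 2 (by decide)
  have h23 : x 3 ≤ x 2 := hx 2 3 (by decide)
  have h34 : x 4 ≤ x 3 := hx 3 4 (by decide)
  -- names for the ten nonnegative-argument values
  set A := g (x 0 - x 1) with hAdef
  set B := g (x 0 - x 2) with hBdef
  set C := g (x 0 - x 3) with hCdef
  set D := g (x 0 - x 4) with hDdef
  set E := g (x 1 - x 2) with hEdef
  set F := g (x 1 - x 3) with hFdef
  set G := g (x 1 - x 4) with hGdef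
  set H := g (x 2 - x 3) with hHdef
  set I := g (x 2 - x 4) with hIdef
  set J := g (x 3 - x 4) with hJdef
  have hA0 : 0 ≤ A := gnn _ (by linarith)
  have hB0 : 0 ≤ B := gnn _ (by linarith)
  have hC0 : 0 ≤ C := gnn _ (by linarith)
  have hD0 : 0 ≤ D := gnn _ (by linarith)
  have hE0 : 0 ≤ E := gnn _ (by linarith)
  have hF0 : 0 ≤ F := gnn _ (by linarith)
  have hG0 : 0 ≤ G := gnn _ (by linarith)
  have hH0 : 0 ≤ H := gnn _ (by linarith)
  have hI0 : 0 ≤ I := gnn _ (by linarith)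
  have hJ0 : 0 ≤ J := gnn _ (by linarith)
  -- comparisons
  have hEB : E ≤ B := gle _ _ (by linarith) (by linarith)
  have hFC : F ≤ C := gle _ _ (by linarith) (by linarith)
  have hGD : G ≤ D := gle _ _ (by linarith) (by linarith)
  have hCD : C ≤ D := gle _ _ (by linarith) (by linarith)
  have hFG : F ≤ G := gle _ _ (by linarith) (by linarith)
  have hHI : H ≤ I := gle _ _ (by linarith) (by linarith)
  have hFB : F ≤ B := gle _ _ (by linarith) (by linarith)
  have hJI : J ≤ I := gle _ _ (by linarith) (by linarith)
  have hEC : E ≤ C := gle _ _ (by linarith) (by linarith)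
  have hHA : H ≤ A := gle _ _ (by linarith) (by linarith)
  have hID : I ≤ D := gle _ _ (by linarith) (by linarith)
  -- Q nonnegativity and inequalities
  have hQ1n : 0 ≤ A*E*F*G := by positivity
  have hQ2n : 0 ≤ B*E*H*I := by positivity
  have hQ3n : 0 ≤ C*F*H*J := by positivity
  have hQ01 : A*E*F*G ≤ A*B*C*D := by
    have h1 : E*F*G ≤ B*C*D :=
      mul_le_mul (mul_le_mul hEB hFC hF0 hB0) hGD hG0 (mul_nonneg hB0 hC0)
    calc A*E*F*G = A*(E*F*G) := by ring
      _ ≤ A*(B*C*D) := mul_le_mul_of_nonneg_left h1 hA0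
      _ = A*B*C*D := by ring
  have hQ34 : C*F*H*J ≤ D*G*I*J := by
    have h1 : C*F*H ≤ D*G*I :=
      mul_le_mul (mul_le_mul hCD hFG hF0 hD0) hHI hH0 (mul_nonneg hD0 hG0)
    calc C*F*H*J = (C*F*H)*J := by ring
      _ ≤ (D*G*I)*J := mul_le_mul_of_nonneg_right h1 hJ0
  have hkey : A*E*F*G + C*F*H*J ≤ A*B*C*D + B*E*H*I := by
    linarith [mul_nonneg (mul_nonneg hA0 hE0)
        (sub_nonneg.2 (mul_le_mul hFB hGD hG0 hB0)),
      mul_nonneg (mul_nonneg hC0 hH0)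
        (sub_nonneg.2 (mul_le_mul hFB hJI hJ0 hB0)),
      mul_nonneg (mul_nonneg hB0 (sub_nonneg.2 hEC))
        (sub_nonneg.2 (mul_le_mul hHA hID hI0 hA0))]
  have ha1' : |a 1| ≤ a 0 := le_trans (le_max_left _ _) ha1
  have ha34' : |a 3| - a 4 ≤ a 0 := le_trans (le_max_right _ _) ha1
  -- expand the sum
  rw [Fin.sum_univ_five]
  have e0 : (Finset.univ.erase (0:Fin 5)) = {1,2,3,4} := by decide
  have e1 : (Finset.univ.erase (1:Fin 5)) = {0,2,3,4} := by decide
  have e2 : (Finset.univ.erase (2:Fin 5)) = {0,1,3,4} := by decide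
  have e3 : (Finset.univ.erase (3:Fin 5)) = {0,1,2,4} := by decide
  have e4 : (Finset.univ.erase (4:Fin 5)) = {0,1,2,3} := by decide
  rw [e0, e1, e2, e3, e4]
  rw [Finset.prod_insert (by decide), Finset.prod_insert (by decide),
    Finset.prod_insert (by decide), Finset.prod_singleton,
    Finset.prod_insert (by decide), Finset.prod_insert (by decide),
    Finset.prod_insert (by decide), Finset.prod_singleton,
    Finset.prod_insert (by decide), Finset.prod_insert (by decide),
    Finset.prod_insert (by decide), Finset.prod_singleton,
    Finset.prod_insert (by decide), Finset.prod_insert (by decide),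
    Finset.prod_insert (by decide), Finset.prod_singleton,
    Finset.prod_insert (by decide), Finset.prod_insert (by decide),
    Finset.prod_insert (by decide), Finset.prod_singleton]
  rcases hpar with hev | hodd
  · have hev' : ∀ u v : ℝ, g (u - v) = g (v - u) := by
      intro u v; rw [show u - v = -(v - u) by ring, hev]
    rw [hev' (x 1) (x 0), hev' (x 2) (x 0), hev' (x 2) (x 1), hev' (x 3) (x 0),
      hev' (x 3) (x 1), hev' (x 3) (x 2), hev' (x 4) (x 0), hev' (x 4) (x 1),
      hev' (x 4) (x 2), hev' (x 4) (x 3)]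
    have := aux_main (a 0) (a 1) (a 2) (a 3) (a 4)
      (A*B*C*D) (A*E*F*G) (B*E*H*I) (C*F*H*J) (D*G*I*J)
      hQ1n hQ2n hQ3n hQ01 hQ34 (by linarith) ha1' ha34' ha3 ha5 ha35
    linarith [this]
  · have hodd' : ∀ u v : ℝ, g (u - v) = -g (v - u) := by
      intro u v; rw [show u - v = -(v - u) by ring, hodd]
    rw [hodd' (x 1) (x 0), hodd' (x 2) (x 0), hodd' (x 2) (x 1), hodd' (x 3) (x 0),
      hodd' (x 3) (x 1), hodd' (x 3) (x 2), hodd' (x 4) (x 0), hodd' (x 4) (x 1),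
      hodd' (x 4) (x 2), hodd' (x 4) (x 3)]
    have := aux_main (a 0) (-(a 1)) (a 2) (-(a 3)) (a 4)
      (A*B*C*D) (A*E*F*G) (B*E*H*I) (C*F*H*J) (D*G*I*J)
      hQ1n hQ2n hQ3n hQ01 hQ34 (by linarith)
      (by rwa [abs_neg]) (by rwa [abs_neg]) ha3 ha5 (by rwa [abs_neg])
    linarith [this]
end

section
/- If f : ℝ → ℝ and g : ℝ → ℝ are both functions in class 𝒢₂, then the pointwise product h defined by h(x) = f(x)·g(x) is also in class 𝒢₂. -/
/-- A function `g : ℝ → ℝ` is in class 𝒢₂ if it is in class 𝒢 and for all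
`x ≥ y ≥ 0` and `z ≥ 0`, `g x * g (y + z) ≥ g y * g (x + z)` and
`g x + g (y + z) ≤ g y + g (x + z)`. -/
def ClassG2 (g : ℝ → ℝ) : Prop :=
  ClassG g ∧ ∀ x y z : ℝ, y ≤ x → 0 ≤ y → 0 ≤ z →
    g y * g (x + z) ≤ g x * g (y + z) ∧ g x + g (y + z) ≤ g y + g (x + z)

lemma classG_nonneg {f : ℝ → ℝ} (hf : ClassG f) {t : ℝ} (ht : 0 ≤ t) : 0 ≤ f t :=
  le_trans hf.2.1 (hf.2.2 (Set.mem_Ici.mpr le_rfl) (Set.mem_Ici.mpr ht) ht)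

theorem stmt_3 (f g : ℝ → ℝ) (hf : ClassG2 f) (hg : ClassG2 g) :
    ClassG2 (fun x => f x * g x) := by
  obtain ⟨⟨hfp, hf0, hfm⟩, hf2⟩ := hf
  obtain ⟨⟨hgp, hg0, hgm⟩, hg2⟩ := hg
  have hfn : ∀ t : ℝ, 0 ≤ t → 0 ≤ f t := fun t ht => classG_nonneg ⟨hfp, hf0, hfm⟩ ht
  have hgn : ∀ t : ℝ, 0 ≤ t → 0 ≤ g t := fun t ht => classG_nonneg ⟨hgp, hg0, hgm⟩ ht
  refine ⟨⟨?_, mul_nonneg hf0 hg0, ?_⟩, ?_⟩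
  · rcases hfp with hfe | hfo <;> rcases hgp with hge | hgo
    · exact Or.inl fun x => by simp [hfe x, hge x]
    · exact Or.inr fun x => by simp [hfe x, hgo x]
    · exact Or.inr fun x => by simp [hfo x, hge x]
    · exact Or.inl fun x => by simp [hfo x, hgo x]
  · intro a ha b hb hab
    simp only [Set.mem_Ici] at ha hb
    exact mul_le_mul (hfm ha hb hab) (hgm ha hb hab) (hgn a ha) (hfn b hb)
  · intro x y z hyx hy hz
    have hx : 0 ≤ x := hy.trans hyx
    have hyz : 0 ≤ y + z := add_nonneg hy hz
    have hxz : 0 ≤ x + z := add_nonneg hx hz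
    obtain ⟨hfm1, hfa⟩ := hf2 x y z hyx hy hz
    obtain ⟨hgm1, hga⟩ := hg2 x y z hyx hy hz
    have hfyx : f y ≤ f x := hfm (Set.mem_Ici.mpr hy) (Set.mem_Ici.mpr hx) hyx
    have hfyzxz : f (y + z) ≤ f (x + z) :=
      hfm (Set.mem_Ici.mpr hyz) (Set.mem_Ici.mpr hxz) (by linarith)
    have hgyzxz : g (y + z) ≤ g (x + z) :=
      hgm (Set.mem_Ici.mpr hyz) (Set.mem_Ici.mpr hxz) (by linarith)
    have hfxxz : f x ≤ f (x + z) :=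
      hfm (Set.mem_Ici.mpr hx) (Set.mem_Ici.mpr hxz) (by linarith)
    have hgyyz : g y ≤ g (y + z) :=
      hgm (Set.mem_Ici.mpr hy) (Set.mem_Ici.mpr hyz) (by linarith)
    have h1 := hfn y hy
    have h2 := hfn x hx
    have h3 := hfn (y + z) hyz
    have h4 := hfn (x + z) hxz
    have h5 := hgn y hy
    have h6 := hgn x hx
    have h7 := hgn (y + z) hyz
    have h8 := hgn (x + z) hxz
    constructor
    · simp only
      nlinarith [mul_le_mul hfm1 hgm1 (mul_nonneg h5 h8) (mul_nonneg h2 h3)]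
    · simp only
      nlinarith [mul_nonneg (sub_nonneg.mpr hfxxz) (sub_nonneg.mpr hgyzxz),
        mul_nonneg h2 (by linarith : (0:ℝ) ≤ g (x + z) - g (y + z) - (g x - g y)),
        mul_nonneg (sub_nonneg.mpr hgyyz) (sub_nonneg.mpr hfyzxz),
        mul_nonneg h5 (by linarith : (0:ℝ) ≤ f (x + z) - f (y + z) - (f x - f y))]
end

section
/- Let g : ℝ → ℝ be a function in class 𝒢 such that g(x) > 0 for all x ≥ 0, g is twice differentiable on [0, ∞), the second derivative of log ∘ g is ≤ 0 at every x ≥ 0, and the second derivative of g is ≥ 0 at every x ≥ 0. Then g is in class 𝒢₂. -/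
/-!
`g'' ≥ 0` makes `g` convex and `(log g)'' ≤ 0` makes `log g` concave on `[0, ∞)`. For
`y ≤ x ≤ x + z` the pairs `(x, y + z)` and `(y, x + z)` have the same sum and the second is the
more spread out, so convexity of `g` gives the additive inequality of 𝒢₂, and concavity of
`log g` gives the multiplicative one.
-/

open Set Real

theorem ConvexOn.add_le_add_of_mem_Icc {s : Set ℝ} {f : ℝ → ℝ} (hf : ConvexOn ℝ s f)
    {a b x y : ℝ} (ha : a ∈ s) (hb : b ∈ s) (hx : x ∈ Icc a b) (hxy : x + y = a + b) :
    f x + f y ≤ f a + f b := by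
  rw [← segment_eq_Icc (hx.1.trans hx.2)] at hx
  obtain ⟨p, q, hp, hq, hpq, rfl⟩ := hx
  obtain rfl : y = q • a + p • b := by
    simp only [smul_eq_mul] at hxy ⊢
    linear_combination hxy - (a + b) * hpq
  have h₁ := hf.2 ha hb hp hq hpq
  have h₂ := hf.2 ha hb hq hp (by rw [add_comm, hpq])
  simp only [smul_eq_mul] at h₁ h₂ ⊢
  linear_combination h₁ + h₂ + (f a + f b) * hpq

theorem ConcaveOn.add_le_add_of_mem_Icc {s : Set ℝ} {f : ℝ → ℝ} (hf : ConcaveOn ℝ s f)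
    {a b x y : ℝ} (ha : a ∈ s) (hb : b ∈ s) (hx : x ∈ Icc a b) (hxy : x + y = a + b) :
    f a + f b ≤ f x + f y := by
  have h := hf.neg.add_le_add_of_mem_Icc ha hb hx hxy
  simp only [Pi.neg_apply] at h
  linarith

theorem ConcaveOn.mul_le_mul_of_log_of_mem_Icc {s : Set ℝ} {g : ℝ → ℝ}
    (hg : ConcaveOn ℝ s fun t ↦ log (g t)) (hpos : ∀ t ∈ s, 0 < g t)
    {a b x y : ℝ} (ha : a ∈ s) (hb : b ∈ s) (hx : x ∈ Icc a b) (hxy : x + y = a + b) :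
    g a * g b ≤ g x * g y := by
  have hy : y ∈ Icc a b := ⟨by linarith [hx.2], by linarith [hx.1]⟩
  have hxs := hg.1.ordConnected.out ha hb hx
  have hys := hg.1.ordConnected.out ha hb hy
  rw [← log_le_log_iff (mul_pos (hpos a ha) (hpos b hb)) (mul_pos (hpos x hxs) (hpos y hys)),
    log_mul (hpos a ha).ne' (hpos b hb).ne', log_mul (hpos x hxs).ne' (hpos y hys).ne']
  exact hg.add_le_add_of_mem_Icc ha hb hx hxy

section SecondDerivativeWithin

variable {D : Set ℝ} {f : ℝ → ℝ}

theorem convexOn_of_derivWithin2_nonneg (hD : Convex ℝ D) (hf : DifferentiableOn ℝ f D)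
    (hf' : DifferentiableOn ℝ (derivWithin f D) D)
    (hf'' : ∀ x ∈ interior D, 0 ≤ derivWithin (derivWithin f D) D x) : ConvexOn ℝ D f :=
  convexOn_of_hasDerivWithinAt2_nonneg hD hf.continuousOn
    (fun x hx ↦ (hf x (interior_subset hx)).hasDerivWithinAt.mono interior_subset)
    (fun x hx ↦ (hf' x (interior_subset hx)).hasDerivWithinAt.mono interior_subset) hf''

theorem concaveOn_of_derivWithin2_nonpos (hD : Convex ℝ D) (hf : DifferentiableOn ℝ f D)
    (hf' : DifferentiableOn ℝ (derivWithin f D) D)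
    (hf'' : ∀ x ∈ interior D, derivWithin (derivWithin f D) D x ≤ 0) : ConcaveOn ℝ D f :=
  concaveOn_of_hasDerivWithinAt2_nonpos hD hf.continuousOn
    (fun x hx ↦ (hf x (interior_subset hx)).hasDerivWithinAt.mono interior_subset)
    (fun x hx ↦ (hf' x (interior_subset hx)).hasDerivWithinAt.mono interior_subset) hf''

theorem DifferentiableOn.derivWithin_log (hD : UniqueDiffOn ℝ D) (hf : DifferentiableOn ℝ f D)
    (hf' : DifferentiableOn ℝ (derivWithin f D) D) (hf₀ : ∀ x ∈ D, f x ≠ 0) :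
    DifferentiableOn ℝ (derivWithin (fun t ↦ Real.log (f t)) D) D :=
  (hf'.div hf hf₀).congr fun x hx ↦
    ((hf x hx).hasDerivWithinAt.log (hf₀ x hx)).derivWithin (hD x hx)

end SecondDerivativeWithin

theorem stmt_4 (g : ℝ → ℝ) (hG : ClassG g)
    (hpos : ∀ x : ℝ, 0 ≤ x → 0 < g x)
    (hdiff : DifferentiableOn ℝ g (Set.Ici 0))
    (hdiff2 : DifferentiableOn ℝ (derivWithin g (Set.Ici 0)) (Set.Ici 0))
    (hlogconc : ∀ x : ℝ, 0 ≤ x →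
      derivWithin (derivWithin (fun t => Real.log (g t)) (Set.Ici 0)) (Set.Ici 0) x ≤ 0)
    (hconv : ∀ x : ℝ, 0 ≤ x →
      0 ≤ derivWithin (derivWithin g (Set.Ici 0)) (Set.Ici 0) x) :
    ClassG2 g := by
  have hg₀ : ∀ x ∈ Ici (0 : ℝ), g x ≠ 0 := fun x hx ↦ (hpos x hx).ne'
  have hg_convex : ConvexOn ℝ (Ici 0) g :=
    convexOn_of_derivWithin2_nonneg (convex_Ici 0) hdiff hdiff2
      fun x hx ↦ hconv x (interior_subset hx)
  have hlog_concave : ConcaveOn ℝ (Ici 0) fun t ↦ log (g t) :=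
    concaveOn_of_derivWithin2_nonpos (convex_Ici 0) (hdiff.log hg₀)
      (hdiff.derivWithin_log (uniqueDiffOn_Ici 0) hdiff2 hg₀)
      fun x hx ↦ hlogconc x (interior_subset hx)
  refine ⟨hG, fun x y z hyx hy hz ↦ ?_⟩
  have hxz : x + z ∈ Ici 0 := by rw [mem_Ici]; linarith
  have hx : x ∈ Icc y (x + z) := ⟨hyx, by linarith⟩
  have hsum : x + (y + z) = y + (x + z) := by ring
  exact ⟨hlog_concave.mul_le_mul_of_log_of_mem_Icc hpos hy hxz hx hsum,
    hg_convex.add_le_add_of_mem_Icc hy hxz hx hsum⟩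
end

section
/- Let f : ℝ → ℝ be a function in class 𝒢₂ and let x ≥ y ≥ 0, z ≥ w ≥ 0, and t ≥ u ≥ 0 be real numbers. Then f(x+t)·f(z+t) − f(x)·f(z) ≥ f(y+u)·f(w+u) − f(y)·f(w). -/
theorem stmt_5 (f : ℝ → ℝ) (hf : ClassG2 f)
    (x y z w t u : ℝ) (hxy : y ≤ x) (hy : 0 ≤ y)
    (hzw : w ≤ z) (hw : 0 ≤ w) (htu : u ≤ t) (hu : 0 ≤ u) :
    f (y + u) * f (w + u) - f y * f w ≤ f (x + t) * f (z + t) - f x * f z := by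
  obtain ⟨⟨_, h0, hmono⟩, hG2⟩ := hf
  have hnn : ∀ a : ℝ, 0 ≤ a → 0 ≤ f a := fun a ha =>
    h0.trans (hmono (Set.mem_Ici.2 le_rfl) (Set.mem_Ici.2 ha) ha)
  have hx : 0 ≤ x := hy.trans hxy
  have hz : 0 ≤ z := hw.trans hzw
  have ht : 0 ≤ t := hu.trans htu
  have hm : ∀ a b : ℝ, 0 ≤ a → a ≤ b → f a ≤ f b := fun a b ha hab =>
    hmono (Set.mem_Ici.2 ha) (Set.mem_Ici.2 (ha.trans hab)) hab
  -- Step A: raise u to t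
  have stepA : f (x + u) * f (z + u) ≤ f (x + t) * f (z + t) :=
    mul_le_mul (hm _ _ (by linarith) (by linarith)) (hm _ _ (by linarith) (by linarith))
      (hnn _ (by linarith)) (hnn _ (by linarith))
  -- Step B: raise y to x
  have hB1 : f x + f (y + u) ≤ f y + f (x + u) := (hG2 x y u hxy hy hu).2
  have hB2 : f y ≤ f x := hm _ _ hy hxy
  have hB3 : f z ≤ f (z + u) := hm _ _ hz (by linarith)
  have stepB : (f x - f y) * f z ≤ (f (x + u) - f (y + u)) * f (z + u) :=
    mul_le_mul (by linarith) hB3 (hnn _ hz) (by linarith)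
  -- Step C: raise w to z
  have hC1 : f z + f (w + u) ≤ f w + f (z + u) := (hG2 z w u hzw hw hu).2
  have hC2 : f w ≤ f z := hm _ _ hw hzw
  have hC3 : f y ≤ f (y + u) := hm _ _ hy (by linarith)
  have stepC : (f z - f w) * f y ≤ (f (z + u) - f (w + u)) * f (y + u) :=
    mul_le_mul (by linarith) hC3 (hnn _ hy) (by linarith)
  nlinarith [stepA, stepB, stepC]
end

section
/- For every real number s ≥ 1, the function g : ℝ → ℝ defined by g(x) = |x|^s is in class 𝒢₂. -/
private lemma flip_slope (p q a b : ℝ) : (p - q) / (a - b) = (q - p) / (b - a) := by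
  rw [← neg_div_neg_eq, neg_sub, neg_sub]

private lemma aux_add (s : ℝ) (hs : 1 ≤ s) {x y z : ℝ} (hyx : y ≤ x) (hy : 0 ≤ y)
    (hz : 0 ≤ z) : x ^ s + (y + z) ^ s ≤ y ^ s + (x + z) ^ s := by
  rcases eq_or_lt_of_le hyx with rfl | hyx
  · ring_nf; exact le_refl _
  rcases eq_or_lt_of_le hz with rfl | hz
  · ring_nf; exact le_refl _
  have hcvx := convexOn_rpow hs
  have hx : (0:ℝ) ≤ x := hy.trans hyx.le
  have h1 : (x ^ s - y ^ s) / (x - y) ≤ ((x + z) ^ s - y ^ s) / ((x + z) - y) :=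
    hcvx.secant_mono (Set.mem_Ici.2 hy) (Set.mem_Ici.2 hx)
      (Set.mem_Ici.2 (by linarith)) (by linarith) (by linarith) (by linarith)
  have h2 : (y ^ s - (x + z) ^ s) / (y - (x + z))
      ≤ ((y + z) ^ s - (x + z) ^ s) / ((y + z) - (x + z)) :=
    hcvx.secant_mono (a := x + z) (Set.mem_Ici.2 (by linarith)) (Set.mem_Ici.2 hy)
      (Set.mem_Ici.2 (by linarith)) (by linarith) (by linarith) (by linarith)
  rw [flip_slope, flip_slope ((y+z)^s)] at h2
  have key : (x ^ s - y ^ s) / (x - y) ≤ ((x + z) ^ s - (y + z) ^ s) / ((x + z) - (y + z)) :=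
    h1.trans h2
  have hd : (0:ℝ) < x - y := by linarith
  have e2 : (x + z) - (y + z) = x - y := by ring
  rw [e2, div_le_div_iff₀ hd hd] at key
  nlinarith [key]

theorem stmt_6 (s : ℝ) (hs : 1 ≤ s) : ClassG2 (fun x : ℝ => |x| ^ s) := by
  have hs0 : (0:ℝ) < s := lt_of_lt_of_le one_pos hs
  constructor
  · refine ⟨Or.inl fun x => by simp [abs_neg], ?_, ?_⟩
    · simp [Real.zero_rpow hs0.ne']
    · intro a ha b hb hab
      simp only
      exact Real.rpow_le_rpow (abs_nonneg a)
        (by rwa [abs_of_nonneg ha, abs_of_nonneg hb]) hs0.le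
  · intro x y z hyx hy hz
    have hx : (0:ℝ) ≤ x := hy.trans hyx
    simp only [abs_of_nonneg hx, abs_of_nonneg hy, abs_of_nonneg (by linarith : (0:ℝ) ≤ x + z),
      abs_of_nonneg (by linarith : (0:ℝ) ≤ y + z)]
    constructor
    · rw [← Real.mul_rpow hy (by linarith), ← Real.mul_rpow hx (by linarith)]
      exact Real.rpow_le_rpow (by positivity) (by nlinarith) hs0.le
    · exact aux_add s hs hyx hy hz
end

section
/- Let x₁ ≥ x₂ ≥ x₃ ≥ x₄ ≥ x₅ ≥ x₆ be real numbers such that x₁ + x₆ ≥ x₂ + x₅ ≥ x₃ + x₄, let a₁, …, a₆ be real numbers with a₁ ≥ |a₂| ≥ a₅ ≥ |a₆| and a₃ ≥ |a₄|, and let g be a function in class 𝒢₂. Then ∑_{i=1}^{6} a_i · ∏_{j ≠ i} g(x_i − x_j) ≥ 0. -/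
private lemma prod5_le {a1 a2 a3 a4 a5 b1 b2 b3 b4 b5 : ℝ}
    (h1 : b1 ≤ a1) (h2 : b2 ≤ a2) (h3 : b3 ≤ a3) (h4 : b4 ≤ a4) (h5 : b5 ≤ a5)
    (n1 : 0 ≤ b1) (n2 : 0 ≤ b2) (n3 : 0 ≤ b3) (n4 : 0 ≤ b4) (n5 : 0 ≤ b5) :
    b1 * (b2 * (b3 * (b4 * b5))) ≤ a1 * (a2 * (a3 * (a4 * a5))) := by
  have q4 : b4 * b5 ≤ a4 * a5 := mul_le_mul h4 h5 n5 (n4.trans h4)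
  have q3 : b3 * (b4 * b5) ≤ a3 * (a4 * a5) :=
    mul_le_mul h3 q4 (mul_nonneg n4 n5) (n3.trans h3)
  have q2 : b2 * (b3 * (b4 * b5)) ≤ a2 * (a3 * (a4 * a5)) :=
    mul_le_mul h2 q3 (mul_nonneg n3 (mul_nonneg n4 n5)) (n2.trans h2)
  exact mul_le_mul h1 q2 (mul_nonneg n2 (mul_nonneg n3 (mul_nonneg n4 n5))) (n1.trans h1)

set_option maxHeartbeats 1000000 in
theorem stmt_8 (x a : Fin 6 → ℝ) (hx : ∀ i j : Fin 6, i ≤ j → x j ≤ x i)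
    (hsum1 : x 1 + x 4 ≤ x 0 + x 5) (hsum2 : x 2 + x 3 ≤ x 1 + x 4)
    (ha1 : |a 1| ≤ a 0) (ha2 : a 4 ≤ |a 1|) (ha5 : |a 5| ≤ a 4)
    (ha3 : |a 3| ≤ a 2)
    (g : ℝ → ℝ) (hg : ClassG2 g) :
    0 ≤ ∑ i, a i * ∏ j ∈ Finset.univ.erase i, g (x i - x j) := by
  obtain ⟨⟨hpar, hg0, hmono⟩, hprop⟩ := hg
  have x01 : x 1 ≤ x 0 := hx 0 1 (by decide)
  have x12 : x 2 ≤ x 1 := hx 1 2 (by decide)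
  have x23 : x 3 ≤ x 2 := hx 2 3 (by decide)
  have x34 : x 4 ≤ x 3 := hx 3 4 (by decide)
  have x45 : x 5 ≤ x 4 := hx 4 5 (by decide)
  have gnn : ∀ u : ℝ, 0 ≤ u → 0 ≤ g u := fun u hu =>
    le_trans hg0 (hmono (Set.mem_Ici.mpr le_rfl) (Set.mem_Ici.mpr hu) hu)
  have gmono : ∀ u v : ℝ, 0 ≤ u → u ≤ v → g u ≤ g v := fun u v hu huv =>
    hmono (Set.mem_Ici.mpr hu) (Set.mem_Ici.mpr (hu.trans huv)) huv
  have gshift : ∀ p q c d : ℝ, 0 ≤ c → c ≤ d → c ≤ p → d - c ≤ q - p →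
      g d - g c ≤ g q - g p := by
    intro p q c d hc hcd hcp hw
    have h1 := (hprop p c (d - c) hcp hc (by linarith)).2
    rw [show c + (d - c) = d by ring] at h1
    have h2 : g (p + (d - c)) ≤ g q := gmono _ _ (by linarith) (by linarith)
    linarith
  have n01 : 0 ≤ g (x 0 - x 1) := gnn _ (by linarith)
  have n02 : 0 ≤ g (x 0 - x 2) := gnn _ (by linarith)
  have n03 : 0 ≤ g (x 0 - x 3) := gnn _ (by linarith)
  have n04 : 0 ≤ g (x 0 - x 4) := gnn _ (by linarith)
  have n05 : 0 ≤ g (x 0 - x 5) := gnn _ (by linarith)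
  have n12 : 0 ≤ g (x 1 - x 2) := gnn _ (by linarith)
  have n13 : 0 ≤ g (x 1 - x 3) := gnn _ (by linarith)
  have n14 : 0 ≤ g (x 1 - x 4) := gnn _ (by linarith)
  have n15 : 0 ≤ g (x 1 - x 5) := gnn _ (by linarith)
  have n23 : 0 ≤ g (x 2 - x 3) := gnn _ (by linarith)
  have n24 : 0 ≤ g (x 2 - x 4) := gnn _ (by linarith)
  have n25 : 0 ≤ g (x 2 - x 5) := gnn _ (by linarith)
  have n34 : 0 ≤ g (x 3 - x 4) := gnn _ (by linarith)
  have n35 : 0 ≤ g (x 3 - x 5) := gnn _ (by linarith)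
  have n45 : 0 ≤ g (x 4 - x 5) := gnn _ (by linarith)
  have m2 : g (x 1 - x 2) ≤ g (x 0 - x 2) := gmono _ _ (by linarith) (by linarith)
  have m3 : g (x 1 - x 3) ≤ g (x 0 - x 3) := gmono _ _ (by linarith) (by linarith)
  have m4 : g (x 1 - x 4) ≤ g (x 0 - x 4) := gmono _ _ (by linarith) (by linarith)
  have m5 : g (x 1 - x 5) ≤ g (x 0 - x 5) := gmono _ _ (by linarith) (by linarith)
  have f1 : g (x 4 - x 5) ≤ g (x 0 - x 1) := gmono _ _ (by linarith) (by linarith)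
  have f2 : g (x 3 - x 4) ≤ g (x 1 - x 2) := gmono _ _ (by linarith) (by linarith)
  have f3 : g (x 2 - x 4) ≤ g (x 1 - x 3) := gmono _ _ (by linarith) (by linarith)
  have f4 : g (x 3 - x 5) ≤ g (x 0 - x 2) := gmono _ _ (by linarith) (by linarith)
  have f5 : g (x 2 - x 5) ≤ g (x 0 - x 3) := gmono _ _ (by linarith) (by linarith)
  have f6 : g (x 1 - x 5) ≤ g (x 0 - x 4) := gmono _ _ (by linarith) (by linarith)
  have i0 : g (x 0 - x 5) - g (x 0 - x 4) ≤ g (x 0 - x 5) - g (x 1 - x 5) := by linarith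
  have i0n : 0 ≤ g (x 0 - x 5) - g (x 0 - x 4) :=
    sub_nonneg.mpr (gmono _ _ (by linarith) (by linarith))
  have i1 : g (x 3 - x 5) - g (x 3 - x 4) ≤ g (x 0 - x 2) - g (x 1 - x 2) :=
    gshift (x 1 - x 2) (x 0 - x 2) (x 3 - x 4) (x 3 - x 5) (by linarith) (by linarith) (by linarith) (by linarith)
  have i1n : 0 ≤ g (x 3 - x 5) - g (x 3 - x 4) :=
    sub_nonneg.mpr (gmono _ _ (by linarith) (by linarith))
  have i2 : g (x 2 - x 5) - g (x 2 - x 4) ≤ g (x 0 - x 3) - g (x 1 - x 3) :=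
    gshift (x 1 - x 3) (x 0 - x 3) (x 2 - x 4) (x 2 - x 5) (by linarith) (by linarith) (by linarith) (by linarith)
  have i2n : 0 ≤ g (x 2 - x 5) - g (x 2 - x 4) :=
    sub_nonneg.mpr (gmono _ _ (by linarith) (by linarith))
  have i3 : g (x 1 - x 5) - g (x 1 - x 4) ≤ g (x 0 - x 4) - g (x 1 - x 4) := by linarith
  have i3n : 0 ≤ g (x 1 - x 5) - g (x 1 - x 4) :=
    sub_nonneg.mpr (gmono _ _ (by linarith) (by linarith))
  have t0 : g (x 4 - x 5) * ((g (x 0 - x 5) - g (x 0 - x 4)) * (g (x 3 - x 4) * (g (x 2 - x 4) * (g (x 1 - x 4))))) ≤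
      g (x 0 - x 1) * ((g (x 0 - x 5) - g (x 1 - x 5)) * (g (x 1 - x 2) * (g (x 1 - x 3) * (g (x 1 - x 4))))) :=
    prod5_le f1 i0 f2 f3 le_rfl n45 i0n n34 n24 n14
  have t1 : g (x 4 - x 5) * (g (x 0 - x 5) * ((g (x 3 - x 5) - g (x 3 - x 4)) * (g (x 2 - x 4) * (g (x 1 - x 4))))) ≤
      g (x 0 - x 1) * (g (x 0 - x 5) * ((g (x 0 - x 2) - g (x 1 - x 2)) * (g (x 1 - x 3) * (g (x 1 - x 4))))) :=
    prod5_le f1 le_rfl i1 f3 le_rfl n45 n05 i1n n24 n14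
  have t2 : g (x 4 - x 5) * (g (x 0 - x 5) * (g (x 3 - x 5) * ((g (x 2 - x 5) - g (x 2 - x 4)) * (g (x 1 - x 4))))) ≤
      g (x 0 - x 1) * (g (x 0 - x 5) * (g (x 0 - x 2) * ((g (x 0 - x 3) - g (x 1 - x 3)) * (g (x 1 - x 4))))) :=
    prod5_le f1 le_rfl f4 i2 le_rfl n45 n05 n35 i2n n14
  have t3 : g (x 4 - x 5) * (g (x 0 - x 5) * (g (x 3 - x 5) * (g (x 2 - x 5) * ((g (x 1 - x 5) - g (x 1 - x 4)))))) ≤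
      g (x 0 - x 1) * (g (x 0 - x 5) * (g (x 0 - x 2) * (g (x 0 - x 3) * ((g (x 0 - x 4) - g (x 1 - x 4)))))) :=
    prod5_le f1 le_rfl f4 f5 i3 n45 n05 n35 n25 i3n
  have hA : (g (x 0 - x 1) * (g (x 1 - x 2) * (g (x 1 - x 3) * (g (x 1 - x 4) * (g (x 1 - x 5)))))) + (g (x 0 - x 5) * (g (x 1 - x 5) * (g (x 2 - x 5) * (g (x 3 - x 5) * (g (x 4 - x 5)))))) ≤ (g (x 0 - x 1) * (g (x 0 - x 2) * (g (x 0 - x 3) * (g (x 0 - x 4) * (g (x 0 - x 5)))))) + (g (x 0 - x 4) * (g (x 1 - x 4) * (g (x 2 - x 4) * (g (x 3 - x 4) * (g (x 4 - x 5)))))) := by linarith [t0, t1, t2, t3]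
  have hD10 : (g (x 0 - x 1) * (g (x 1 - x 2) * (g (x 1 - x 3) * (g (x 1 - x 4) * (g (x 1 - x 5)))))) ≤ (g (x 0 - x 1) * (g (x 0 - x 2) * (g (x 0 - x 3) * (g (x 0 - x 4) * (g (x 0 - x 5)))))) :=
    prod5_le le_rfl m2 m3 m4 m5 n01 n12 n13 n14 n15
  have hp1 := (hprop (x 0 - x 2) (x 3 - x 5) (x 2 - x 3) (by linarith) (by linarith) (by linarith)).1
  rw [show x 0 - x 2 + (x 2 - x 3) = x 0 - x 3 by ring,
      show x 3 - x 5 + (x 2 - x 3) = x 2 - x 5 by ring] at hp1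
  have hp2 := (hprop (x 1 - x 2) (x 3 - x 4) (x 2 - x 3) (by linarith) (by linarith) (by linarith)).1
  rw [show x 1 - x 2 + (x 2 - x 3) = x 1 - x 3 by ring,
      show x 3 - x 4 + (x 2 - x 3) = x 2 - x 4 by ring] at hp2
  have hBB := mul_le_mul_of_nonneg_left (mul_le_mul hp1 hp2
    (mul_nonneg n34 n13) (mul_nonneg n02 n25)) n23
  have hB : (g (x 0 - x 3) * (g (x 1 - x 3) * (g (x 2 - x 3) * (g (x 3 - x 4) * (g (x 3 - x 5)))))) ≤ (g (x 0 - x 2) * (g (x 1 - x 2) * (g (x 2 - x 3) * (g (x 2 - x 4) * (g (x 2 - x 5)))))) := by linarith [hBB]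
  have hD0nn : 0 ≤ (g (x 0 - x 1) * (g (x 0 - x 2) * (g (x 0 - x 3) * (g (x 0 - x 4) * (g (x 0 - x 5)))))) := mul_nonneg n01 (mul_nonneg n02 (mul_nonneg n03 (mul_nonneg n04 (n05))))
  have hD1nn : 0 ≤ (g (x 0 - x 1) * (g (x 1 - x 2) * (g (x 1 - x 3) * (g (x 1 - x 4) * (g (x 1 - x 5)))))) := mul_nonneg n01 (mul_nonneg n12 (mul_nonneg n13 (mul_nonneg n14 (n15))))
  have hD2nn : 0 ≤ (g (x 0 - x 2) * (g (x 1 - x 2) * (g (x 2 - x 3) * (g (x 2 - x 4) * (g (x 2 - x 5)))))) := mul_nonneg n02 (mul_nonneg n12 (mul_nonneg n23 (mul_nonneg n24 (n25))))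
  have hD3nn : 0 ≤ (g (x 0 - x 3) * (g (x 1 - x 3) * (g (x 2 - x 3) * (g (x 3 - x 4) * (g (x 3 - x 5)))))) := mul_nonneg n03 (mul_nonneg n13 (mul_nonneg n23 (mul_nonneg n34 (n35))))
  have hD4nn : 0 ≤ (g (x 0 - x 4) * (g (x 1 - x 4) * (g (x 2 - x 4) * (g (x 3 - x 4) * (g (x 4 - x 5)))))) := mul_nonneg n04 (mul_nonneg n14 (mul_nonneg n24 (mul_nonneg n34 (n45))))
  have hD5nn : 0 ≤ (g (x 0 - x 5) * (g (x 1 - x 5) * (g (x 2 - x 5) * (g (x 3 - x 5) * (g (x 4 - x 5)))))) := mul_nonneg n05 (mul_nonneg n15 (mul_nonneg n25 (mul_nonneg n35 (n45))))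
  have h1 : 0 ≤ (a 0 - |a 1|) * (g (x 0 - x 1) * (g (x 0 - x 2) * (g (x 0 - x 3) * (g (x 0 - x 4) * (g (x 0 - x 5)))))) := mul_nonneg (by linarith) hD0nn
  have h2 : 0 ≤ (|a 1| - a 4) * ((g (x 0 - x 1) * (g (x 0 - x 2) * (g (x 0 - x 3) * (g (x 0 - x 4) * (g (x 0 - x 5)))))) - (g (x 0 - x 1) * (g (x 1 - x 2) * (g (x 1 - x 3) * (g (x 1 - x 4) * (g (x 1 - x 5))))))) :=
    mul_nonneg (by linarith) (by linarith)
  have h3 : 0 ≤ a 4 * ((g (x 0 - x 1) * (g (x 0 - x 2) * (g (x 0 - x 3) * (g (x 0 - x 4) * (g (x 0 - x 5)))))) + (g (x 0 - x 4) * (g (x 1 - x 4) * (g (x 2 - x 4) * (g (x 3 - x 4) * (g (x 4 - x 5)))))) - (g (x 0 - x 1) * (g (x 1 - x 2) * (g (x 1 - x 3) * (g (x 1 - x 4) * (g (x 1 - x 5)))))) - (g (x 0 - x 5) * (g (x 1 - x 5) * (g (x 2 - x 5) * (g (x 3 - x 5) * (g (x 4 - x 5))))))) :=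
    mul_nonneg (by linarith [abs_nonneg (a 5)]) (by linarith)
  have h4 : 0 ≤ (a 4 - |a 5|) * (g (x 0 - x 5) * (g (x 1 - x 5) * (g (x 2 - x 5) * (g (x 3 - x 5) * (g (x 4 - x 5)))))) := mul_nonneg (by linarith) hD5nn
  have h5 : 0 ≤ (a 2 - |a 3|) * (g (x 0 - x 2) * (g (x 1 - x 2) * (g (x 2 - x 3) * (g (x 2 - x 4) * (g (x 2 - x 5)))))) := mul_nonneg (by linarith) hD2nn
  have h6 : 0 ≤ |a 3| * ((g (x 0 - x 2) * (g (x 1 - x 2) * (g (x 2 - x 3) * (g (x 2 - x 4) * (g (x 2 - x 5)))))) - (g (x 0 - x 3) * (g (x 1 - x 3) * (g (x 2 - x 3) * (g (x 3 - x 4) * (g (x 3 - x 5))))))) :=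
    mul_nonneg (abs_nonneg _) (by linarith)
  rw [Fin.sum_univ_six]
  rw [show (Finset.univ.erase (0:Fin 6)) = {1,2,3,4,5} by decide]
  rw [show (Finset.univ.erase (1:Fin 6)) = {0,2,3,4,5} by decide]
  rw [show (Finset.univ.erase (2:Fin 6)) = {0,1,3,4,5} by decide]
  rw [show (Finset.univ.erase (3:Fin 6)) = {0,1,2,4,5} by decide]
  rw [show (Finset.univ.erase (4:Fin 6)) = {0,1,2,3,5} by decide]
  rw [show (Finset.univ.erase (5:Fin 6)) = {0,1,2,3,4} by decide]
  repeat rw [Finset.prod_insert (by decide)]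
  simp only [Finset.prod_singleton]
  rcases hpar with he | ho
  · have flip : ∀ i j : Fin 6, g (x i - x j) = g (x j - x i) := fun i j => by
      rw [show x i - x j = -(x j - x i) by ring, he]
    rw [flip 1 0, flip 2 0, flip 2 1, flip 3 0, flip 3 1, flip 3 2, flip 4 0, flip 4 1, flip 4 2, flip 4 3, flip 5 0, flip 5 1, flip 5 2, flip 5 3, flip 5 4]
    have s1 := mul_le_mul_of_nonneg_right (neg_abs_le (a 1)) hD1nn
    have s3 := mul_le_mul_of_nonneg_right (neg_abs_le (a 3)) hD3nn
    have s5 := mul_le_mul_of_nonneg_right (neg_abs_le (a 5)) hD5nn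
    linarith [h1, h2, h3, h4, h5, h6, s1, s3, s5]
  · have flip : ∀ i j : Fin 6, g (x i - x j) = -g (x j - x i) := fun i j => by
      rw [show x i - x j = -(x j - x i) by ring, ho]
    rw [flip 1 0, flip 2 0, flip 2 1, flip 3 0, flip 3 1, flip 3 2, flip 4 0, flip 4 1, flip 4 2, flip 4 3, flip 5 0, flip 5 1, flip 5 2, flip 5 3, flip 5 4]
    have s1 := mul_le_mul_of_nonneg_right (neg_le_neg (le_abs_self (a 1))) hD1nn
    have s3 := mul_le_mul_of_nonneg_right (neg_le_neg (le_abs_self (a 3))) hD3nn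
    have s5 := mul_le_mul_of_nonneg_right (neg_le_neg (le_abs_self (a 5))) hD5nn
    linarith [h1, h2, h3, h4, h5, h6, s1, s3, s5]
end

section
/- Let x₁ ≥ x₂ ≥ x₃ ≥ x₄ ≥ x₅ ≥ x₆ ≥ x₇ be real numbers such that x₁ + x₆ ≥ x₂ + x₅ ≥ x₃ + x₄, let a₁, …, a₇ be real numbers with a₁ ≥ |a₂| ≥ a₅ ≥ |a₆| − a₇, a₃ ≥ |a₄|, a₅ ≥ 0 and a₇ ≥ 0, and let g be a function in class 𝒢₂. Then ∑_{i=1}^{7} a_i · ∏_{j ≠ i} g(x_i − x_j) ≥ 0. -/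
private lemma mul2_le {a b c d : ℝ} (ha : 0 ≤ a) (hab : a ≤ b) (hc : 0 ≤ c) (hcd : c ≤ d) :
    a * c ≤ b * d := mul_le_mul hab hcd hc (ha.trans hab)

private lemma mul3_le {a1 a2 a3 b1 b2 b3 : ℝ}
    (n1 : 0 ≤ a1) (n2 : 0 ≤ a2) (n3 : 0 ≤ a3)
    (h1 : a1 ≤ b1) (h2 : a2 ≤ b2) (h3 : a3 ≤ b3) :
    a1 * (a2 * a3) ≤ b1 * (b2 * b3) :=
  mul2_le n1 h1 (mul_nonneg n2 n3) (mul2_le n2 h2 n3 h3)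

private lemma mul4_le {a1 a2 a3 a4 b1 b2 b3 b4 : ℝ}
    (n1 : 0 ≤ a1) (n2 : 0 ≤ a2) (n3 : 0 ≤ a3) (n4 : 0 ≤ a4)
    (h1 : a1 ≤ b1) (h2 : a2 ≤ b2) (h3 : a3 ≤ b3) (h4 : a4 ≤ b4) :
    a1 * (a2 * (a3 * a4)) ≤ b1 * (b2 * (b3 * b4)) :=
  mul2_le n1 h1 (mul_nonneg n2 (mul_nonneg n3 n4)) (mul3_le n2 n3 n4 h2 h3 h4)

private lemma mul5_le {a1 a2 a3 a4 a5 b1 b2 b3 b4 b5 : ℝ}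
    (n1 : 0 ≤ a1) (n2 : 0 ≤ a2) (n3 : 0 ≤ a3) (n4 : 0 ≤ a4) (n5 : 0 ≤ a5)
    (h1 : a1 ≤ b1) (h2 : a2 ≤ b2) (h3 : a3 ≤ b3) (h4 : a4 ≤ b4) (h5 : a5 ≤ b5) :
    a1 * (a2 * (a3 * (a4 * a5))) ≤ b1 * (b2 * (b3 * (b4 * b5))) :=
  mul2_le n1 h1 (mul_nonneg n2 (mul_nonneg n3 (mul_nonneg n4 n5)))
    (mul4_le n2 n3 n4 n5 h2 h3 h4 h5)

private lemma mul6_le {a1 a2 a3 a4 a5 a6 b1 b2 b3 b4 b5 b6 : ℝ}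
    (n1 : 0 ≤ a1) (n2 : 0 ≤ a2) (n3 : 0 ≤ a3) (n4 : 0 ≤ a4) (n5 : 0 ≤ a5) (n6 : 0 ≤ a6)
    (h1 : a1 ≤ b1) (h2 : a2 ≤ b2) (h3 : a3 ≤ b3) (h4 : a4 ≤ b4) (h5 : a5 ≤ b5) (h6 : a6 ≤ b6) :
    a1 * (a2 * (a3 * (a4 * (a5 * a6)))) ≤ b1 * (b2 * (b3 * (b4 * (b5 * b6)))) :=
  mul2_le n1 h1 (mul_nonneg n2 (mul_nonneg n3 (mul_nonneg n4 (mul_nonneg n5 n6))))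
    (mul5_le n2 n3 n4 n5 n6 h2 h3 h4 h5 h6)

set_option maxHeartbeats 4000000 in
theorem stmt_9 (x a : Fin 7 → ℝ) (hx : ∀ i j : Fin 7, i ≤ j → x j ≤ x i)
    (hsum1 : x 1 + x 4 ≤ x 0 + x 5) (hsum2 : x 2 + x 3 ≤ x 1 + x 4)
    (ha1 : |a 1| ≤ a 0) (ha2 : a 4 ≤ |a 1|) (ha5 : |a 5| - a 6 ≤ a 4)
    (ha3 : |a 3| ≤ a 2) (ha5' : 0 ≤ a 4) (ha7 : 0 ≤ a 6)
    (g : ℝ → ℝ) (hg : ClassG2 g) :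
    0 ≤ ∑ i, a i * ∏ j ∈ Finset.univ.erase i, g (x i - x j) := by
  obtain ⟨⟨hpar, hg0, hmono⟩, hprop⟩ := hg
  have hpos : ∀ t : ℝ, 0 ≤ t → 0 ≤ g t := fun t ht =>
    hg0.trans (hmono (Set.mem_Ici.2 le_rfl) (Set.mem_Ici.2 ht) ht)
  have m : ∀ {s t : ℝ}, 0 ≤ s → s ≤ t → g s ≤ g t := fun hs hst =>
    hmono (Set.mem_Ici.2 hs) (Set.mem_Ici.2 (hs.trans hst)) hst
  have hmul : ∀ u v w : ℝ, v ≤ u → 0 ≤ v → 0 ≤ w → g v * g (u + w) ≤ g u * g (v + w) :=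
    fun u v w h1 h2 h3 => (hprop u v w h1 h2 h3).1
  have hadd : ∀ u v w : ℝ, v ≤ u → 0 ≤ v → 0 ≤ w → g u + g (v + w) ≤ g v + g (u + w) :=
    fun u v w h1 h2 h3 => (hprop u v w h1 h2 h3).2
  have hx01 : x 1 ≤ x 0 := hx 0 1 (by decide)
  have hx12 : x 2 ≤ x 1 := hx 1 2 (by decide)
  have hx23 : x 3 ≤ x 2 := hx 2 3 (by decide)
  have hx34 : x 4 ≤ x 3 := hx 3 4 (by decide)
  have hx45 : x 5 ≤ x 4 := hx 4 5 (by decide)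
  have hx56 : x 6 ≤ x 5 := hx 5 6 (by decide)
  have n : ∀ i j : Fin 7, i ≤ j → 0 ≤ g (x i - x j) := fun i j h => hpos _ (sub_nonneg.2 (hx i j h))
  have n01 : 0 ≤ g (x 0 - x 1) := n 0 1 (by decide)
  have n02 : 0 ≤ g (x 0 - x 2) := n 0 2 (by decide)
  have n03 : 0 ≤ g (x 0 - x 3) := n 0 3 (by decide)
  have n04 : 0 ≤ g (x 0 - x 4) := n 0 4 (by decide)
  have n05 : 0 ≤ g (x 0 - x 5) := n 0 5 (by decide)
  have n06 : 0 ≤ g (x 0 - x 6) := n 0 6 (by decide)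
  have n12 : 0 ≤ g (x 1 - x 2) := n 1 2 (by decide)
  have n13 : 0 ≤ g (x 1 - x 3) := n 1 3 (by decide)
  have n14 : 0 ≤ g (x 1 - x 4) := n 1 4 (by decide)
  have n15 : 0 ≤ g (x 1 - x 5) := n 1 5 (by decide)
  have n16 : 0 ≤ g (x 1 - x 6) := n 1 6 (by decide)
  have n23 : 0 ≤ g (x 2 - x 3) := n 2 3 (by decide)
  have n24 : 0 ≤ g (x 2 - x 4) := n 2 4 (by decide)
  have n25 : 0 ≤ g (x 2 - x 5) := n 2 5 (by decide)
  have n26 : 0 ≤ g (x 2 - x 6) := n 2 6 (by decide)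
  have n34 : 0 ≤ g (x 3 - x 4) := n 3 4 (by decide)
  have n35 : 0 ≤ g (x 3 - x 5) := n 3 5 (by decide)
  have n36 : 0 ≤ g (x 3 - x 6) := n 3 6 (by decide)
  have n45 : 0 ≤ g (x 4 - x 5) := n 4 5 (by decide)
  have n46 : 0 ≤ g (x 4 - x 6) := n 4 6 (by decide)
  have n56 : 0 ≤ g (x 5 - x 6) := n 5 6 (by decide)
  have nG0 : 0 ≤ g (x 0 - x 1) * g (x 0 - x 2) * g (x 0 - x 3) * g (x 0 - x 4) * g (x 0 - x 5) * g (x 0 - x 6) := (mul_nonneg (mul_nonneg (mul_nonneg (mul_nonneg (mul_nonneg n01 n02) n03) n04) n05) n06)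
  have nG1 : 0 ≤ g (x 0 - x 1) * g (x 1 - x 2) * g (x 1 - x 3) * g (x 1 - x 4) * g (x 1 - x 5) * g (x 1 - x 6) := (mul_nonneg (mul_nonneg (mul_nonneg (mul_nonneg (mul_nonneg n01 n12) n13) n14) n15) n16)
  have nG2 : 0 ≤ g (x 0 - x 2) * g (x 1 - x 2) * g (x 2 - x 3) * g (x 2 - x 4) * g (x 2 - x 5) * g (x 2 - x 6) := (mul_nonneg (mul_nonneg (mul_nonneg (mul_nonneg (mul_nonneg n02 n12) n23) n24) n25) n26)
  have nG3 : 0 ≤ g (x 0 - x 3) * g (x 1 - x 3) * g (x 2 - x 3) * g (x 3 - x 4) * g (x 3 - x 5) * g (x 3 - x 6) := (mul_nonneg (mul_nonneg (mul_nonneg (mul_nonneg (mul_nonneg n03 n13) n23) n34) n35) n36)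
  have nG4 : 0 ≤ g (x 0 - x 4) * g (x 1 - x 4) * g (x 2 - x 4) * g (x 3 - x 4) * g (x 4 - x 5) * g (x 4 - x 6) := (mul_nonneg (mul_nonneg (mul_nonneg (mul_nonneg (mul_nonneg n04 n14) n24) n34) n45) n46)
  have nG5 : 0 ≤ g (x 0 - x 5) * g (x 1 - x 5) * g (x 2 - x 5) * g (x 3 - x 5) * g (x 4 - x 5) * g (x 5 - x 6) := (mul_nonneg (mul_nonneg (mul_nonneg (mul_nonneg (mul_nonneg n05 n15) n25) n35) n45) n56)
  have nG6 : 0 ≤ g (x 0 - x 6) * g (x 1 - x 6) * g (x 2 - x 6) * g (x 3 - x 6) * g (x 4 - x 6) * g (x 5 - x 6) := (mul_nonneg (mul_nonneg (mul_nonneg (mul_nonneg (mul_nonneg n06 n16) n26) n36) n46) n56)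
  have p0 : ∏ j ∈ Finset.univ.erase (0:Fin 7), g (x 0 - x j) = g (x 0 - x 1) * g (x 0 - x 2) * g (x 0 - x 3) * g (x 0 - x 4) * g (x 0 - x 5) * g (x 0 - x 6) := by
    rw [show Finset.univ.erase ((0:Fin 7)) = {1,2,3,4,5,6} from by decide]
    simp [Finset.prod_insert, Finset.mem_insert]
    ring
  have p1 : ∏ j ∈ Finset.univ.erase (1:Fin 7), g (x 1 - x j) = g (x 1 - x 0) * g (x 1 - x 2) * g (x 1 - x 3) * g (x 1 - x 4) * g (x 1 - x 5) * g (x 1 - x 6) := by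
    rw [show Finset.univ.erase ((1:Fin 7)) = {0,2,3,4,5,6} from by decide]
    simp [Finset.prod_insert, Finset.mem_insert]
    ring
  have p2 : ∏ j ∈ Finset.univ.erase (2:Fin 7), g (x 2 - x j) = g (x 2 - x 0) * g (x 2 - x 1) * g (x 2 - x 3) * g (x 2 - x 4) * g (x 2 - x 5) * g (x 2 - x 6) := by
    rw [show Finset.univ.erase ((2:Fin 7)) = {0,1,3,4,5,6} from by decide]
    simp [Finset.prod_insert, Finset.mem_insert]
    ring
  have p3 : ∏ j ∈ Finset.univ.erase (3:Fin 7), g (x 3 - x j) = g (x 3 - x 0) * g (x 3 - x 1) * g (x 3 - x 2) * g (x 3 - x 4) * g (x 3 - x 5) * g (x 3 - x 6) := by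
    rw [show Finset.univ.erase ((3:Fin 7)) = {0,1,2,4,5,6} from by decide]
    simp [Finset.prod_insert, Finset.mem_insert]
    ring
  have p4 : ∏ j ∈ Finset.univ.erase (4:Fin 7), g (x 4 - x j) = g (x 4 - x 0) * g (x 4 - x 1) * g (x 4 - x 2) * g (x 4 - x 3) * g (x 4 - x 5) * g (x 4 - x 6) := by
    rw [show Finset.univ.erase ((4:Fin 7)) = {0,1,2,3,5,6} from by decide]
    simp [Finset.prod_insert, Finset.mem_insert]
    ring
  have p5 : ∏ j ∈ Finset.univ.erase (5:Fin 7), g (x 5 - x j) = g (x 5 - x 0) * g (x 5 - x 1) * g (x 5 - x 2) * g (x 5 - x 3) * g (x 5 - x 4) * g (x 5 - x 6) := by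
    rw [show Finset.univ.erase ((5:Fin 7)) = {0,1,2,3,4,6} from by decide]
    simp [Finset.prod_insert, Finset.mem_insert]
    ring
  have p6 : ∏ j ∈ Finset.univ.erase (6:Fin 7), g (x 6 - x j) = g (x 6 - x 0) * g (x 6 - x 1) * g (x 6 - x 2) * g (x 6 - x 3) * g (x 6 - x 4) * g (x 6 - x 5) := by
    rw [show Finset.univ.erase ((6:Fin 7)) = {0,1,2,3,4,5} from by decide]
    simp [Finset.prod_insert, Finset.mem_insert]
    ring
  have eq2 : g (x 2 - x 0) * g (x 2 - x 1) * g (x 2 - x 3) * g (x 2 - x 4) * g (x 2 - x 5) * g (x 2 - x 6) = g (x 0 - x 2) * g (x 1 - x 2) * g (x 2 - x 3) * g (x 2 - x 4) * g (x 2 - x 5) * g (x 2 - x 6) := by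
    rcases hpar with h | h <;> simp only [show x 2 - x 0 = -(x 0 - x 2) from by ring, show x 2 - x 1 = -(x 1 - x 2) from by ring, h] <;> ring
  have eq4 : g (x 4 - x 0) * g (x 4 - x 1) * g (x 4 - x 2) * g (x 4 - x 3) * g (x 4 - x 5) * g (x 4 - x 6) = g (x 0 - x 4) * g (x 1 - x 4) * g (x 2 - x 4) * g (x 3 - x 4) * g (x 4 - x 5) * g (x 4 - x 6) := by
    rcases hpar with h | h <;> simp only [show x 4 - x 0 = -(x 0 - x 4) from by ring, show x 4 - x 1 = -(x 1 - x 4) from by ring, show x 4 - x 2 = -(x 2 - x 4) from by ring, show x 4 - x 3 = -(x 3 - x 4) from by ring, h] <;> ring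
  have eq6 : g (x 6 - x 0) * g (x 6 - x 1) * g (x 6 - x 2) * g (x 6 - x 3) * g (x 6 - x 4) * g (x 6 - x 5) = g (x 0 - x 6) * g (x 1 - x 6) * g (x 2 - x 6) * g (x 3 - x 6) * g (x 4 - x 6) * g (x 5 - x 6) := by
    rcases hpar with h | h <;> simp only [show x 6 - x 0 = -(x 0 - x 6) from by ring, show x 6 - x 1 = -(x 1 - x 6) from by ring, show x 6 - x 2 = -(x 2 - x 6) from by ring, show x 6 - x 3 = -(x 3 - x 6) from by ring, show x 6 - x 4 = -(x 4 - x 6) from by ring, show x 6 - x 5 = -(x 5 - x 6) from by ring, h] <;> ring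
  have b1 : -|a 1| * (g (x 0 - x 1) * g (x 1 - x 2) * g (x 1 - x 3) * g (x 1 - x 4) * g (x 1 - x 5) * g (x 1 - x 6)) ≤ a 1 * (g (x 1 - x 0) * g (x 1 - x 2) * g (x 1 - x 3) * g (x 1 - x 4) * g (x 1 - x 5) * g (x 1 - x 6)) := by
    rcases hpar with h | h <;> simp only [show x 1 - x 0 = -(x 0 - x 1) from by ring, h] <;>
      linarith [mul_le_mul_of_nonneg_right (le_abs_self (a 1)) nG1,
        mul_le_mul_of_nonneg_right (neg_abs_le (a 1)) nG1]
  have b3 : -|a 3| * (g (x 0 - x 3) * g (x 1 - x 3) * g (x 2 - x 3) * g (x 3 - x 4) * g (x 3 - x 5) * g (x 3 - x 6)) ≤ a 3 * (g (x 3 - x 0) * g (x 3 - x 1) * g (x 3 - x 2) * g (x 3 - x 4) * g (x 3 - x 5) * g (x 3 - x 6)) := by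
    rcases hpar with h | h <;> simp only [show x 3 - x 0 = -(x 0 - x 3) from by ring, show x 3 - x 1 = -(x 1 - x 3) from by ring, show x 3 - x 2 = -(x 2 - x 3) from by ring, h] <;>
      linarith [mul_le_mul_of_nonneg_right (le_abs_self (a 3)) nG3,
        mul_le_mul_of_nonneg_right (neg_abs_le (a 3)) nG3]
  have b5 : -|a 5| * (g (x 0 - x 5) * g (x 1 - x 5) * g (x 2 - x 5) * g (x 3 - x 5) * g (x 4 - x 5) * g (x 5 - x 6)) ≤ a 5 * (g (x 5 - x 0) * g (x 5 - x 1) * g (x 5 - x 2) * g (x 5 - x 3) * g (x 5 - x 4) * g (x 5 - x 6)) := by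
    rcases hpar with h | h <;> simp only [show x 5 - x 0 = -(x 0 - x 5) from by ring, show x 5 - x 1 = -(x 1 - x 5) from by ring, show x 5 - x 2 = -(x 2 - x 5) from by ring, show x 5 - x 3 = -(x 3 - x 5) from by ring, show x 5 - x 4 = -(x 4 - x 5) from by ring, h] <;>
      linarith [mul_le_mul_of_nonneg_right (le_abs_self (a 5)) nG5,
        mul_le_mul_of_nonneg_right (neg_abs_le (a 5)) nG5]
  have F1 : g (x 0 - x 1) * g (x 1 - x 2) * g (x 1 - x 3) * g (x 1 - x 4) * g (x 1 - x 5) * g (x 1 - x 6) ≤ g (x 0 - x 1) * g (x 0 - x 2) * g (x 0 - x 3) * g (x 0 - x 4) * g (x 0 - x 5) * g (x 0 - x 6) := by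
    calc g (x 0 - x 1) * g (x 1 - x 2) * g (x 1 - x 3) * g (x 1 - x 4) * g (x 1 - x 5) * g (x 1 - x 6) = g (x 0 - x 1) * (g (x 1 - x 2) * (g (x 1 - x 3) * (g (x 1 - x 4) * (g (x 1 - x 5) * (g (x 1 - x 6)))))) := by ring
      _ ≤ g (x 0 - x 1) * (g (x 0 - x 2) * (g (x 0 - x 3) * (g (x 0 - x 4) * (g (x 0 - x 5) * (g (x 0 - x 6)))))) := by
          refine mul6_le n01 n12 n13 n14 n15 n16 le_rfl ?_ ?_ ?_ ?_ ?_ <;>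
            exact m (by linarith) (by linarith)
      _ = g (x 0 - x 1) * g (x 0 - x 2) * g (x 0 - x 3) * g (x 0 - x 4) * g (x 0 - x 5) * g (x 0 - x 6) := by ring
  have prop1 := hmul (x 1 - x 2) (x 3 - x 4) (x 2 - x 3) (by linarith) (by linarith) (by linarith)
  rw [show x 1 - x 2 + (x 2 - x 3) = x 1 - x 3 from by ring,
      show x 3 - x 4 + (x 2 - x 3) = x 2 - x 4 from by ring] at prop1
  have prop2 := hmul (x 0 - x 2) (x 3 - x 5) (x 2 - x 3) (by linarith) (by linarith) (by linarith)
  rw [show x 0 - x 2 + (x 2 - x 3) = x 0 - x 3 from by ring,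
      show x 3 - x 5 + (x 2 - x 3) = x 2 - x 5 from by ring] at prop2
  have F2 : g (x 0 - x 3) * g (x 1 - x 3) * g (x 2 - x 3) * g (x 3 - x 4) * g (x 3 - x 5) * g (x 3 - x 6) ≤ g (x 0 - x 2) * g (x 1 - x 2) * g (x 2 - x 3) * g (x 2 - x 4) * g (x 2 - x 5) * g (x 2 - x 6) := by
    calc g (x 0 - x 3) * g (x 1 - x 3) * g (x 2 - x 3) * g (x 3 - x 4) * g (x 3 - x 5) * g (x 3 - x 6) = (g (x 3 - x 5) * g (x 0 - x 3)) * ((g (x 3 - x 4) * g (x 1 - x 3)) * (g (x 2 - x 3) * g (x 3 - x 6))) := by ring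
      _ ≤ (g (x 0 - x 2) * g (x 2 - x 5)) * ((g (x 1 - x 2) * g (x 2 - x 4)) * (g (x 2 - x 3) * g (x 3 - x 6))) :=
          mul3_le (mul_nonneg n35 n03) (mul_nonneg n34 n13) (mul_nonneg n23 n36)
            prop2 prop1 le_rfl
      _ ≤ (g (x 0 - x 2) * g (x 2 - x 5)) * ((g (x 1 - x 2) * g (x 2 - x 4)) * (g (x 2 - x 3) * g (x 2 - x 6))) :=
          mul3_le (mul_nonneg n02 n25) (mul_nonneg n12 n24) (mul_nonneg n23 n36)
            le_rfl le_rfl (mul2_le n23 le_rfl n36 (m (by linarith) (by linarith)))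
      _ = g (x 0 - x 2) * g (x 1 - x 2) * g (x 2 - x 3) * g (x 2 - x 4) * g (x 2 - x 5) * g (x 2 - x 6) := by ring
  have F3 : g (x 0 - x 5) * g (x 1 - x 5) * g (x 2 - x 5) * g (x 3 - x 5) * g (x 4 - x 5) * g (x 5 - x 6) ≤ g (x 0 - x 6) * g (x 1 - x 6) * g (x 2 - x 6) * g (x 3 - x 6) * g (x 4 - x 6) * g (x 5 - x 6) := by
    calc g (x 0 - x 5) * g (x 1 - x 5) * g (x 2 - x 5) * g (x 3 - x 5) * g (x 4 - x 5) * g (x 5 - x 6) = g (x 0 - x 5) * (g (x 1 - x 5) * (g (x 2 - x 5) * (g (x 3 - x 5) * (g (x 4 - x 5) * (g (x 5 - x 6)))))) := by ring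
      _ ≤ g (x 0 - x 6) * (g (x 1 - x 6) * (g (x 2 - x 6) * (g (x 3 - x 6) * (g (x 4 - x 6) * (g (x 5 - x 6)))))) := by
          refine mul6_le n05 n15 n25 n35 n45 n56 ?_ ?_ ?_ ?_ ?_ le_rfl <;>
            exact m (by linarith) (by linarith)
      _ = g (x 0 - x 6) * g (x 1 - x 6) * g (x 2 - x 6) * g (x 3 - x 6) * g (x 4 - x 6) * g (x 5 - x 6) := by ring
  have nAz : 0 ≤ g (x 1 - x 2 + (x 4 - x 5)) := hpos _ (by linarith)
  have nBz : 0 ≤ g (x 1 - x 3 + (x 4 - x 5)) := hpos _ (by linarith)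
  have nCz : 0 ≤ g (x 1 - x 6 + (x 4 - x 5)) := hpos _ (by linarith)
  have hA2z : g (x 1 - x 2) ≤ g (x 1 - x 2 + (x 4 - x 5)) := m (by linarith) (by linarith)
  have hB2z : g (x 1 - x 3) ≤ g (x 1 - x 3 + (x 4 - x 5)) := m (by linarith) (by linarith)
  have hC2z : g (x 1 - x 6) ≤ g (x 1 - x 6 + (x 4 - x 5)) := m (by linarith) (by linarith)
  have hAz1 : g (x 1 - x 2 + (x 4 - x 5)) ≤ g (x 0 - x 2) := m (by linarith) (by linarith)
  have hBz1 : g (x 1 - x 3 + (x 4 - x 5)) ≤ g (x 0 - x 3) := m (by linarith) (by linarith)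
  have hCz1 : g (x 1 - x 6 + (x 4 - x 5)) ≤ g (x 0 - x 6) := m (by linarith) (by linarith)
  have ha56 : g (x 2 - x 4) ≤ g (x 2 - x 5) := m (by linarith) (by linarith)
  have hb56 : g (x 3 - x 4) ≤ g (x 3 - x 5) := m (by linarith) (by linarith)
  have hc65 : g (x 5 - x 6) ≤ g (x 4 - x 6) := m (by linarith) (by linarith)
  have hb5A2 : g (x 3 - x 4) ≤ g (x 1 - x 2) := m (by linarith) (by linarith)
  have hc5Cz : g (x 4 - x 6) ≤ g (x 1 - x 6 + (x 4 - x 5)) := m (by linarith) (by linarith)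
  have ha6Bz : g (x 2 - x 5) ≤ g (x 1 - x 3 + (x 4 - x 5)) := m (by linarith) (by linarith)
  have I1 := hadd (x 1 - x 3) (x 2 - x 4) (x 4 - x 5) (by linarith) (by linarith) (by linarith)
  rw [show x 2 - x 4 + (x 4 - x 5) = x 2 - x 5 from by ring] at I1
  have I2 := hadd (x 1 - x 2) (x 3 - x 4) (x 4 - x 5) (by linarith) (by linarith) (by linarith)
  rw [show x 3 - x 4 + (x 4 - x 5) = x 3 - x 5 from by ring] at I2
  have s1 : g (x 2 - x 5) * g (x 3 - x 5) * g (x 5 - x 6) - g (x 2 - x 4) * g (x 3 - x 4) * g (x 4 - x 6) ≤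
      (g (x 2 - x 5) - g (x 2 - x 4)) * (g (x 3 - x 4) * g (x 4 - x 6)) + g (x 2 - x 5) * ((g (x 3 - x 5) - g (x 3 - x 4)) * g (x 4 - x 6)) := by
    linarith [mul_nonneg (mul_nonneg n25 n35) (sub_nonneg.2 hc65)]
  have s2 : (g (x 2 - x 5) - g (x 2 - x 4)) * (g (x 3 - x 4) * g (x 4 - x 6)) ≤ (g (x 1 - x 3 + (x 4 - x 5)) - g (x 1 - x 3)) * (g (x 1 - x 2) * g (x 1 - x 6 + (x 4 - x 5))) :=
    mul2_le (sub_nonneg.2 ha56) (by linarith) (mul_nonneg n34 n46)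
      (mul2_le n34 hb5A2 n46 hc5Cz)
  have s3 : g (x 2 - x 5) * ((g (x 3 - x 5) - g (x 3 - x 4)) * g (x 4 - x 6)) ≤ g (x 1 - x 3 + (x 4 - x 5)) * ((g (x 1 - x 2 + (x 4 - x 5)) - g (x 1 - x 2)) * g (x 1 - x 6 + (x 4 - x 5))) :=
    mul2_le n25 ha6Bz (mul_nonneg (sub_nonneg.2 hb56) n46)
      (mul2_le (sub_nonneg.2 hb56) (by linarith) n46 hc5Cz)
  have s4 : (g (x 1 - x 3 + (x 4 - x 5)) - g (x 1 - x 3)) * (g (x 1 - x 2) * g (x 1 - x 6 + (x 4 - x 5))) + g (x 1 - x 3 + (x 4 - x 5)) * ((g (x 1 - x 2 + (x 4 - x 5)) - g (x 1 - x 2)) * g (x 1 - x 6 + (x 4 - x 5))) ≤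
      g (x 1 - x 2 + (x 4 - x 5)) * g (x 1 - x 3 + (x 4 - x 5)) * g (x 1 - x 6 + (x 4 - x 5)) - g (x 1 - x 2) * g (x 1 - x 3) * g (x 1 - x 6) := by
    linarith [mul_nonneg (mul_nonneg n12 n13) (sub_nonneg.2 hC2z)]
  have s5 : g (x 1 - x 2 + (x 4 - x 5)) * g (x 1 - x 3 + (x 4 - x 5)) * g (x 1 - x 6 + (x 4 - x 5)) ≤ g (x 0 - x 2) * g (x 0 - x 3) * g (x 0 - x 6) := by
    calc g (x 1 - x 2 + (x 4 - x 5)) * g (x 1 - x 3 + (x 4 - x 5)) * g (x 1 - x 6 + (x 4 - x 5)) = g (x 1 - x 2 + (x 4 - x 5)) * (g (x 1 - x 3 + (x 4 - x 5)) * g (x 1 - x 6 + (x 4 - x 5))) := by ring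
      _ ≤ g (x 0 - x 2) * (g (x 0 - x 3) * g (x 0 - x 6)) := mul3_le nAz nBz nCz hAz1 hBz1 hCz1
      _ = g (x 0 - x 2) * g (x 0 - x 3) * g (x 0 - x 6) := by ring
  have L3 : g (x 1 - x 2) * g (x 1 - x 3) * g (x 1 - x 6) + g (x 2 - x 5) * g (x 3 - x 5) * g (x 5 - x 6) ≤
      g (x 0 - x 2) * g (x 0 - x 3) * g (x 0 - x 6) + g (x 2 - x 4) * g (x 3 - x 4) * g (x 4 - x 6) := by linarith
  have hp154 : g (x 1 - x 5) ≤ g (x 0 - x 4) := m (by linarith) (by linarith)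
  have K2 : g (x 1 - x 5) * (g (x 1 - x 2) * g (x 1 - x 3) * g (x 1 - x 6) + g (x 2 - x 5) * g (x 3 - x 5) * g (x 5 - x 6)) ≤
      g (x 0 - x 4) * (g (x 0 - x 2) * g (x 0 - x 3) * g (x 0 - x 6) + g (x 2 - x 4) * g (x 3 - x 4) * g (x 4 - x 6)) := by
    have h1 : g (x 1 - x 5) * (g (x 1 - x 2) * g (x 1 - x 3) * g (x 1 - x 6) + g (x 2 - x 5) * g (x 3 - x 5) * g (x 5 - x 6)) ≤
        g (x 0 - x 4) * (g (x 1 - x 2) * g (x 1 - x 3) * g (x 1 - x 6) + g (x 2 - x 5) * g (x 3 - x 5) * g (x 5 - x 6)) :=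
      mul_le_mul_of_nonneg_right hp154 (add_nonneg (mul_nonneg (mul_nonneg n12 n13) n16) (mul_nonneg (mul_nonneg n25 n35) n56))
    have h2 : g (x 0 - x 4) * (g (x 1 - x 2) * g (x 1 - x 3) * g (x 1 - x 6) + g (x 2 - x 5) * g (x 3 - x 5) * g (x 5 - x 6)) ≤
        g (x 0 - x 4) * (g (x 0 - x 2) * g (x 0 - x 3) * g (x 0 - x 6) + g (x 2 - x 4) * g (x 3 - x 4) * g (x 4 - x 6)) :=
      mul_le_mul_of_nonneg_left L3 n04
    linarith
  have hPQ : g (x 1 - x 5) * (g (x 2 - x 5) * (g (x 3 - x 5) * g (x 5 - x 6))) ≤ g (x 0 - x 4) * (g (x 0 - x 3) * (g (x 0 - x 2) * g (x 0 - x 6))) :=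
    mul4_le n15 n25 n35 n56 (m (by linarith) (by linarith)) (m (by linarith) (by linarith))
      (m (by linarith) (by linarith)) (m (by linarith) (by linarith))
  have hq0514 : g (x 1 - x 4) ≤ g (x 0 - x 5) := m (by linarith) (by linarith)
  have K3 : g (x 0 - x 5) * (g (x 1 - x 5) * (g (x 2 - x 5) * (g (x 3 - x 5) * g (x 5 - x 6)))) +
        g (x 1 - x 4) * (g (x 1 - x 5) * (g (x 1 - x 2) * (g (x 1 - x 3) * g (x 1 - x 6)))) ≤
      g (x 0 - x 5) * (g (x 0 - x 2) * (g (x 0 - x 3) * (g (x 0 - x 4) * g (x 0 - x 6)))) +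
        g (x 1 - x 4) * (g (x 0 - x 4) * (g (x 2 - x 4) * (g (x 3 - x 4) * g (x 4 - x 6)))) := by
    have h1 : 0 ≤ (g (x 0 - x 5) - g (x 1 - x 4)) *
        (g (x 0 - x 2) * (g (x 0 - x 3) * (g (x 0 - x 4) * g (x 0 - x 6))) - g (x 1 - x 5) * (g (x 2 - x 5) * (g (x 3 - x 5) * g (x 5 - x 6)))) :=
      mul_nonneg (by linarith) (by linarith)
    have h2 : 0 ≤ g (x 1 - x 4) *
        (g (x 0 - x 2) * (g (x 0 - x 3) * (g (x 0 - x 4) * g (x 0 - x 6))) + g (x 0 - x 4) * (g (x 2 - x 4) * (g (x 3 - x 4) * g (x 4 - x 6)))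
          - g (x 1 - x 5) * (g (x 2 - x 5) * (g (x 3 - x 5) * g (x 5 - x 6))) - g (x 1 - x 5) * (g (x 1 - x 2) * (g (x 1 - x 3) * g (x 1 - x 6)))) :=
      mul_nonneg n14 (by linarith [K2])
    linarith [h1, h2]
  have hAB : g (x 1 - x 2) * (g (x 1 - x 3) * (g (x 1 - x 4) * (g (x 1 - x 5) * (g (x 1 - x 6))))) ≤
      g (x 0 - x 2) * (g (x 0 - x 3) * (g (x 0 - x 4) * (g (x 0 - x 5) * (g (x 0 - x 6))))) :=
    mul5_le n12 n13 n14 n15 n16 (m (by linarith) (by linarith)) (m (by linarith) (by linarith))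
      (m (by linarith) (by linarith)) (m (by linarith) (by linarith)) (m (by linarith) (by linarith))
  have KEY : (g (x 0 - x 1) * g (x 1 - x 2) * g (x 1 - x 3) * g (x 1 - x 4) * g (x 1 - x 5) * g (x 1 - x 6)) + (g (x 0 - x 5) * g (x 1 - x 5) * g (x 2 - x 5) * g (x 3 - x 5) * g (x 4 - x 5) * g (x 5 - x 6)) ≤ (g (x 0 - x 1) * g (x 0 - x 2) * g (x 0 - x 3) * g (x 0 - x 4) * g (x 0 - x 5) * g (x 0 - x 6)) + (g (x 0 - x 4) * g (x 1 - x 4) * g (x 2 - x 4) * g (x 3 - x 4) * g (x 4 - x 5) * g (x 4 - x 6)) := by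
    have h1 : 0 ≤ (g (x 0 - x 1) - g (x 4 - x 5)) *
        (g (x 0 - x 2) * (g (x 0 - x 3) * (g (x 0 - x 4) * (g (x 0 - x 5) * (g (x 0 - x 6))))) -
         g (x 1 - x 2) * (g (x 1 - x 3) * (g (x 1 - x 4) * (g (x 1 - x 5) * (g (x 1 - x 6)))))) :=
      mul_nonneg (by linarith [m (show (0:ℝ) ≤ x 4 - x 5 from by linarith) (show x 4 - x 5 ≤ x 0 - x 1 from by linarith)]) (by linarith)
    have h2 : 0 ≤ g (x 4 - x 5) *
        (g (x 0 - x 2) * (g (x 0 - x 3) * (g (x 0 - x 4) * (g (x 0 - x 5) * (g (x 0 - x 6))))) +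
         (g (x 1 - x 4) * (g (x 0 - x 4) * (g (x 2 - x 4) * (g (x 3 - x 4) * g (x 4 - x 6))))) -
         g (x 1 - x 2) * (g (x 1 - x 3) * (g (x 1 - x 4) * (g (x 1 - x 5) * (g (x 1 - x 6))))) -
         (g (x 0 - x 5) * (g (x 1 - x 5) * (g (x 2 - x 5) * (g (x 3 - x 5) * g (x 5 - x 6)))))) :=
      mul_nonneg n45 (by linarith [K3])
    linarith [h1, h2]
  have t1 : 0 ≤ (a 0 - |a 1|) * (g (x 0 - x 1) * g (x 0 - x 2) * g (x 0 - x 3) * g (x 0 - x 4) * g (x 0 - x 5) * g (x 0 - x 6)) := mul_nonneg (by linarith) nG0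
  have t2 : 0 ≤ (|a 1| - a 4) * ((g (x 0 - x 1) * g (x 0 - x 2) * g (x 0 - x 3) * g (x 0 - x 4) * g (x 0 - x 5) * g (x 0 - x 6)) - (g (x 0 - x 1) * g (x 1 - x 2) * g (x 1 - x 3) * g (x 1 - x 4) * g (x 1 - x 5) * g (x 1 - x 6))) := mul_nonneg (by linarith) (by linarith)
  have t3 : 0 ≤ (a 2 - |a 3|) * (g (x 0 - x 2) * g (x 1 - x 2) * g (x 2 - x 3) * g (x 2 - x 4) * g (x 2 - x 5) * g (x 2 - x 6)) := mul_nonneg (by linarith) nG2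
  have t4 : 0 ≤ |a 3| * ((g (x 0 - x 2) * g (x 1 - x 2) * g (x 2 - x 3) * g (x 2 - x 4) * g (x 2 - x 5) * g (x 2 - x 6)) - (g (x 0 - x 3) * g (x 1 - x 3) * g (x 2 - x 3) * g (x 3 - x 4) * g (x 3 - x 5) * g (x 3 - x 6))) := mul_nonneg (abs_nonneg _) (by linarith)
  have t5 : 0 ≤ (a 4 + a 6 - |a 5|) * (g (x 0 - x 5) * g (x 1 - x 5) * g (x 2 - x 5) * g (x 3 - x 5) * g (x 4 - x 5) * g (x 5 - x 6)) := mul_nonneg (by linarith) nG5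
  have t6 : 0 ≤ a 6 * ((g (x 0 - x 6) * g (x 1 - x 6) * g (x 2 - x 6) * g (x 3 - x 6) * g (x 4 - x 6) * g (x 5 - x 6)) - (g (x 0 - x 5) * g (x 1 - x 5) * g (x 2 - x 5) * g (x 3 - x 5) * g (x 4 - x 5) * g (x 5 - x 6))) := mul_nonneg ha7 (by linarith)
  have t7 : 0 ≤ a 4 * ((g (x 0 - x 1) * g (x 0 - x 2) * g (x 0 - x 3) * g (x 0 - x 4) * g (x 0 - x 5) * g (x 0 - x 6)) + (g (x 0 - x 4) * g (x 1 - x 4) * g (x 2 - x 4) * g (x 3 - x 4) * g (x 4 - x 5) * g (x 4 - x 6)) - (g (x 0 - x 1) * g (x 1 - x 2) * g (x 1 - x 3) * g (x 1 - x 4) * g (x 1 - x 5) * g (x 1 - x 6)) - (g (x 0 - x 5) * g (x 1 - x 5) * g (x 2 - x 5) * g (x 3 - x 5) * g (x 4 - x 5) * g (x 5 - x 6))) := mul_nonneg ha5' (by linarith)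
  rw [Fin.sum_univ_seven, p0, p1, p2, p3, p4, p5, p6, eq2, eq4, eq6]
  linarith [b1, b3, b5, t1, t2, t3, t4, t5, t6, t7]
end

section
/- Let x ≥ y ≥ z be real numbers, let g be a function in class 𝒢, and let f : ℝ → ℝ be a nonnegative function that is either monotone (nondecreasing or nonincreasing) or convex. Then f(x)·g(x−y)·g(x−z) + f(y)·g(y−z)·g(y−x) + f(z)·g(z−x)·g(z−y) ≥ 0. -/
theorem stmt_10 (x y z : ℝ) (hxy : y ≤ x) (hyz : z ≤ y)
    (g : ℝ → ℝ) (hg : ClassG g)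
    (f : ℝ → ℝ) (hf0 : ∀ t, 0 ≤ f t)
    (hf : Monotone f ∨ Antitone f ∨ ConvexOn ℝ Set.univ f) :
    0 ≤ f x * g (x - y) * g (x - z) + f y * g (y - z) * g (y - x)
      + f z * g (z - x) * g (z - y) := by
  obtain ⟨hpar, hg0, hmono⟩ := hg
  have gnn : ∀ t : ℝ, 0 ≤ t → 0 ≤ g t := fun t ht =>
    hg0.trans (hmono (Set.mem_Ici.mpr le_rfl) (Set.mem_Ici.mpr ht) ht)
  have ha : (0:ℝ) ≤ x - y := by linarith
  have hb : (0:ℝ) ≤ y - z := by linarith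
  have hab : (0:ℝ) ≤ x - z := by linarith
  have hga : 0 ≤ g (x - y) := gnn _ ha
  have hgb : 0 ≤ g (y - z) := gnn _ hb
  have hgab : 0 ≤ g (x - z) := gnn _ hab
  rcases hpar with he | ho
  · have e1 : g (y - x) = g (x - y) := by rw [show y - x = -(x - y) by ring, he]
    have e2 : g (z - x) = g (x - z) := by rw [show z - x = -(x - z) by ring, he]
    have e3 : g (z - y) = g (y - z) := by rw [show z - y = -(y - z) by ring, he]
    rw [e1, e2, e3]
    have t1 : 0 ≤ f x * g (x - y) * g (x - z) := mul_nonneg (mul_nonneg (hf0 x) hga) hgab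
    have t2 : 0 ≤ f y * g (y - z) * g (x - y) := mul_nonneg (mul_nonneg (hf0 y) hgb) hga
    have t3 : 0 ≤ f z * g (x - z) * g (y - z) := mul_nonneg (mul_nonneg (hf0 z) hgab) hgb
    linarith
  · have e1 : g (y - x) = -g (x - y) := by rw [show y - x = -(x - y) by ring, ho]
    have e2 : g (z - x) = -g (x - z) := by rw [show z - x = -(x - z) by ring, ho]
    have e3 : g (z - y) = -g (y - z) := by rw [show z - y = -(y - z) by ring, ho]
    rw [e1, e2, e3]
    have hm1 : g (x - y) ≤ g (x - z) :=
      hmono (Set.mem_Ici.mpr ha) (Set.mem_Ici.mpr hab) (by linarith)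
    have hm2 : g (y - z) ≤ g (x - z) :=
      hmono (Set.mem_Ici.mpr hb) (Set.mem_Ici.mpr hab) (by linarith)
    have hkey : f y ≤ f x + f z := by
      rcases hf with h | h | h
      · have := h hxy; linarith [hf0 z]
      · have := h hyz; linarith [hf0 x]
      · by_cases hxz : x = z
        · have : y = x := le_antisymm hxy (hxz ▸ hyz)
          rw [this]; linarith [hf0 z]
        · have hxz' : z < x := lt_of_le_of_ne (hyz.trans hxy) (Ne.symm hxz)
          set t : ℝ := (y - z) / (x - z) with ht_def
          have ht0 : 0 ≤ t := div_nonneg hb (by linarith)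
          have ht1 : t ≤ 1 := by
            rw [div_le_one (by linarith)]; linarith
          have hne : x - z ≠ 0 := ne_of_gt (by linarith)
          have hyc : t • x + (1 - t) • z = y := by
            simp only [smul_eq_mul, ht_def]
            field_simp
            ring
          have := h.2 (Set.mem_univ x) (Set.mem_univ z) ht0 (by linarith : (0:ℝ) ≤ 1 - t)
            (by ring)
          rw [hyc] at this
          simp only [smul_eq_mul] at this
          nlinarith [mul_nonneg (sub_nonneg.2 ht1) (hf0 x), mul_nonneg ht0 (hf0 z)]
    have h1 : 0 ≤ f x * g (x - y) * (g (x - z) - g (y - z)) :=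
      mul_nonneg (mul_nonneg (hf0 x) hga) (by linarith)
    have h2 : 0 ≤ f z * g (y - z) * (g (x - z) - g (x - y)) :=
      mul_nonneg (mul_nonneg (hf0 z) hgb) (by linarith)
    have h3 : 0 ≤ (f x + f z - f y) * (g (x - y) * g (y - z)) :=
      mul_nonneg (by linarith) (mul_nonneg hga hgb)
    nlinarith [h1, h2, h3]
end

section
/- Let k ≥ 0 be a real number and define g : ℝ → ℝ by g(x) = sign(x)·|x|^k, where sign(x) = 1 for x > 0, sign(0) = 0, and sign(x) = −1 for x < 0. Let f : ℝ → ℝ. Then the inequality f(x)·g(x−y)·g(x−z) + f(y)·g(y−z)·g(y−x) + f(z)·g(z−x)·g(z−y) ≥ 0 holds for all real numbers x ≥ y ≥ z if and only if f(λx + (1−λ)z) ≤ f(x)/λ^k + f(z)/(1−λ)^k for all λ ∈ (0,1) and all real x ≠ z. -/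
/-! For `z < y < x` write `y = l x + (1 - l) z`, so that `y - z = l (x - z)` and
`x - y = (1 - l) (x - z)`. The cyclic sum is then `(l (x - z)) ^ k ((1 - l) (x - z)) ^ k` times
`f x / l ^ k + f z / (1 - l) ^ k - f y`, so the two conditions agree on triples of distinct points.
When two of the points coincide, the sum is the value of `f` at the third point times a square,
so it remains to see that the second condition forces `f ≥ 0`.

If `f q < 0`, there are points `a < q < b` with `f a, f b ≤ f q`: for `k > 0` let `l → 0` with
`x = q`, where `f q / l ^ k → -∞`; for `k = 0` halve repeatedly towards `q`, gaining `f q` at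
each step. Writing `q` between `a` and `b`, the inequality together with `l ^ k, (1 - l) ^ k ≤ 1`
gives `f q ≤ f a + f b ≤ 2 f q`, a contradiction. -/

/-- The function `x ↦ sign x * |x| ^ k` where `sign` is the sign function and
`|x| ^ k` is the real power. -/
noncomputable def signPow (k : ℝ) : ℝ → ℝ := fun x => Real.sign x * |x| ^ k

open Filter Topology

def KConvex (k : ℝ) (f : ℝ → ℝ) : Prop :=
  ∀ l x z : ℝ, 0 < l → l < 1 → x ≠ z →
    f (l * x + (1 - l) * z) ≤ f x / l ^ k + f z / (1 - l) ^ k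

noncomputable def schurSum (k : ℝ) (f : ℝ → ℝ) (x y z : ℝ) : ℝ :=
  f x * signPow k (x - y) * signPow k (x - z)
    + f y * signPow k (y - z) * signPow k (y - x)
    + f z * signPow k (z - x) * signPow k (z - y)

section signPow

variable (k : ℝ)

lemma signPow_zero : signPow k 0 = 0 := by simp [signPow]

lemma signPow_neg (x : ℝ) : signPow k (-x) = -signPow k x := by
  simp [signPow, Real.sign_neg]

lemma signPow_of_pos {x : ℝ} (hx : 0 < x) : signPow k x = x ^ k := by
  simp [signPow, Real.sign_of_pos hx, abs_of_pos hx]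

end signPow

section schurSum

variable (k : ℝ) (f : ℝ → ℝ)

lemma schurSum_of_right_eq (x z : ℝ) : schurSum k f x z z = f x * signPow k (x - z) ^ 2 := by
  simp only [schurSum, sub_self, signPow_zero, mul_zero, zero_mul, add_zero]
  ring

lemma schurSum_of_left_eq (x z : ℝ) : schurSum k f x x z = f z * signPow k (z - x) ^ 2 := by
  simp only [schurSum, sub_self, signPow_zero, mul_zero, zero_mul, add_zero, zero_add]
  ring

lemma schurSum_lineMap {l x z : ℝ} (hl0 : 0 < l) (hl1 : l < 1) (hzx : z < x) :
    schurSum k f x (l * x + (1 - l) * z) z =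
      (l * (x - z)) ^ k * ((1 - l) * (x - z)) ^ k *
        (f x / l ^ k + f z / (1 - l) ^ k - f (l * x + (1 - l) * z)) := by
  have hd : 0 < x - z := sub_pos.2 hzx
  have hl1' : 0 < 1 - l := sub_pos.2 hl1
  set y := l * x + (1 - l) * z
  have hxy : x - y = (1 - l) * (x - z) := by ring
  have hyz : y - z = l * (x - z) := by ring
  rw [schurSum, ← neg_sub x y, ← neg_sub x z, ← neg_sub y z, signPow_neg, signPow_neg,
    signPow_neg, hxy, hyz, signPow_of_pos k hd, signPow_of_pos k (by positivity),
    signPow_of_pos k (by positivity), Real.mul_rpow hl0.le hd.le,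
    Real.mul_rpow hl1'.le hd.le]
  have : 0 < l ^ k := by positivity
  have : 0 < (1 - l) ^ k := by positivity
  field_simp
  ring

lemma schurSum_lineMap_nonneg_iff {l x z : ℝ} (hl0 : 0 < l) (hl1 : l < 1) (hzx : z < x) :
    0 ≤ schurSum k f x (l * x + (1 - l) * z) z ↔
      f (l * x + (1 - l) * z) ≤ f x / l ^ k + f z / (1 - l) ^ k := by
  have hd : 0 < x - z := sub_pos.2 hzx
  have hl1' : 0 < 1 - l := sub_pos.2 hl1
  rw [schurSum_lineMap k f hl0 hl1 hzx, mul_nonneg_iff_of_pos_left (by positivity), sub_nonneg]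

end schurSum

lemma exists_eq_lineMap_of_lt_of_lt {x y z : ℝ} (hzy : z < y) (hyx : y < x) :
    ∃ l, 0 < l ∧ l < 1 ∧ l * x + (1 - l) * z = y := by
  have hd : 0 < x - z := by linarith
  refine ⟨(y - z) / (x - z), div_pos (by linarith) hd, (div_lt_one hd).2 (by linarith), ?_⟩
  field_simp
  ring

namespace KConvex

variable {k : ℝ} {f : ℝ → ℝ}

lemma of_lt (h : ∀ l x z : ℝ, 0 < l → l < 1 → z < x →
    f (l * x + (1 - l) * z) ≤ f x / l ^ k + f z / (1 - l) ^ k) : KConvex k f := by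
  intro l x z hl0 hl1 hxz
  rcases hxz.lt_or_gt with hxz | hzx
  · have := h (1 - l) z x (sub_pos.2 hl1) (by linarith) hxz
    rwa [sub_sub_cancel, add_comm, add_comm (f z / _)] at this
  · exact h l x z hl0 hl1 hzx

lemma comp_neg (hf : KConvex k f) : KConvex k (fun t => f (-t)) := by
  intro l x z hl0 hl1 hxz
  have := hf l (-x) (-z) hl0 hl1 (neg_injective.ne hxz)
  rwa [show l * -x + (1 - l) * -z = -(l * x + (1 - l) * z) by ring] at this

lemma exists_gt_le_of_neg_of_eq_zero (hf : KConvex 0 f) {q : ℝ} (hq : f q < 0) :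
    ∃ b, q < b ∧ f b ≤ f q := by
  have descend : ∀ n : ℕ, ∃ b, q < b ∧ f b ≤ f (q + 1) + n * f q := by
    intro n
    induction n with
    | zero => exact ⟨q + 1, by linarith, by simp⟩
    | succ n ih =>
      obtain ⟨b, hqb, hb⟩ := ih
      have := hf (1 / 2) q b (by norm_num) (by norm_num) hqb.ne
      simp only [Real.rpow_zero, div_one] at this
      exact ⟨1 / 2 * q + (1 - 1 / 2) * b, by linarith, by push_cast; linarith⟩
  obtain ⟨n, hn⟩ := exists_nat_gt (f (q + 1) / -f q + 1)
  obtain ⟨b, hqb, hb⟩ := descend n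
  refine ⟨b, hqb, hb.trans ?_⟩
  have : f (q + 1) < (n - 1) * -f q := by
    rwa [← lt_sub_iff_add_lt, div_lt_iff₀ (neg_pos.2 hq)] at hn
  linarith

lemma exists_gt_le_of_neg_of_pos (hk : 0 < k) (hf : KConvex k f) {q : ℝ} (hq : f q < 0) :
    ∃ b, q < b ∧ f b ≤ f q := by
  have hlim : Tendsto (fun l => f q / l ^ k + f (q + 1) / (1 - l) ^ k) (𝓝[>] 0) atBot := by
    have hpow : Tendsto (fun l : ℝ => f q * l ^ (-k)) (𝓝[>] 0) atBot :=
      (tendsto_rpow_neg_nhdsGT_zero (neg_lt_zero.2 hk)).const_mul_atTop_of_neg hq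
    have hcont : ContinuousAt (fun l : ℝ => f (q + 1) / (1 - l) ^ k) 0 := by
      fun_prop (disch := norm_num)
    refine (hpow.atBot_add (hcont.tendsto.mono_left nhdsWithin_le_nhds)).congr' ?_
    filter_upwards [self_mem_nhdsWithin] with l (hl : 0 < l)
    rw [Real.rpow_neg hl.le, div_eq_mul_inv (f q)]
  obtain ⟨l, hl, hl0, hl1⟩ :=
    ((hlim.eventually (eventually_le_atBot (f q))).and (Ioo_mem_nhdsGT one_pos)).exists
  exact ⟨l * q + (1 - l) * (q + 1), by nlinarith,
    (hf l q (q + 1) hl0 hl1 (by linarith)).trans hl⟩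

lemma exists_gt_le_of_neg (hk : 0 ≤ k) (hf : KConvex k f) {q : ℝ} (hq : f q < 0) :
    ∃ b, q < b ∧ f b ≤ f q := by
  rcases hk.eq_or_lt with rfl | hk
  · exact hf.exists_gt_le_of_neg_of_eq_zero hq
  · exact hf.exists_gt_le_of_neg_of_pos hk hq

lemma exists_lt_le_of_neg (hk : 0 ≤ k) (hf : KConvex k f) {q : ℝ} (hq : f q < 0) :
    ∃ a, a < q ∧ f a ≤ f q := by
  obtain ⟨b, hqb, hb⟩ := hf.comp_neg.exists_gt_le_of_neg hk (q := -q) (by simpa using hq)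
  exact ⟨-b, by linarith, by simpa using hb⟩

theorem nonneg (hk : 0 ≤ k) (hf : KConvex k f) (q : ℝ) : 0 ≤ f q := by
  by_contra! hq
  obtain ⟨a, haq, ha⟩ := hf.exists_lt_le_of_neg hk hq
  obtain ⟨b, hqb, hb⟩ := hf.exists_gt_le_of_neg hk hq
  obtain ⟨l, hl0, hl1, rfl⟩ := exists_eq_lineMap_of_lt_of_lt haq hqb
  have hlk : 0 < l ^ k := by positivity
  have hlk' : 0 < (1 - l) ^ k := Real.rpow_pos_of_pos (sub_pos.2 hl1) k
  have ha' : f a / (1 - l) ^ k ≤ f a := by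
    rw [div_le_iff₀ hlk']
    nlinarith [Real.rpow_le_one (sub_pos.2 hl1).le (by linarith) hk]
  have hb' : f b / l ^ k ≤ f b := by
    rw [div_le_iff₀ hlk]
    nlinarith [Real.rpow_le_one hl0.le hl1.le hk]
  linarith [hf l b a hl0 hl1 (by linarith)]

end KConvex

theorem stmt_12 (k : ℝ) (hk : 0 ≤ k) (f : ℝ → ℝ) :
    (∀ x y z : ℝ, z ≤ y → y ≤ x →
        0 ≤ f x * signPow k (x - y) * signPow k (x - z)
          + f y * signPow k (y - z) * signPow k (y - x)
          + f z * signPow k (z - x) * signPow k (z - y)) ↔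
    (∀ (l x z : ℝ), 0 < l → l < 1 → x ≠ z →
        f (l * x + (1 - l) * z) ≤ f x / l ^ k + f z / (1 - l) ^ k) := by
  refine ⟨fun h => KConvex.of_lt fun l x z hl0 hl1 hzx => ?_,
    fun (hf : KConvex k f) x y z hzy hyx => ?_⟩
  · refine (schurSum_lineMap_nonneg_iff k f hl0 hl1 hzx).1 (h _ _ _ ?_ ?_) <;> nlinarith
  · change 0 ≤ schurSum k f x y z
    rcases hzy.eq_or_lt with rfl | hzy
    · rw [schurSum_of_right_eq]
      exact mul_nonneg (hf.nonneg hk x) (sq_nonneg _)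
    rcases hyx.eq_or_lt with rfl | hyx
    · rw [schurSum_of_left_eq]
      exact mul_nonneg (hf.nonneg hk z) (sq_nonneg _)
    obtain ⟨l, hl0, hl1, rfl⟩ := exists_eq_lineMap_of_lt_of_lt hzy hyx
    exact (schurSum_lineMap_nonneg_iff k f hl0 hl1 (hzy.trans hyx)).2
      (hf l x z hl0 hl1 (by linarith))
end

section
/- Let x ≥ y ≥ z and a ≥ c be real numbers, let k > 0 be an integer, let f : ℝ → ℝ be a convex function with f(t) ≥ 0 for all t, let α ∈ [0,1], and set b = α·a + (1−α)·c. Then α·f(a)·(x−y)^k·(x−z)^k + f(b)·(y−z)^k·(y−x)^k + (1−α)·f(c)·(z−x)^k·(z−y)^k ≥ 0. -/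
theorem stmt_13 (x y z a c : ℝ) (hxy : y ≤ x) (hyz : z ≤ y) (hac : c ≤ a)
    (k : ℕ) (hk : 0 < k)
    (f : ℝ → ℝ) (hconv : ConvexOn ℝ Set.univ f) (hf0 : ∀ t, 0 ≤ f t)
    (α : ℝ) (hα0 : 0 ≤ α) (hα1 : α ≤ 1) (b : ℝ) (hb : b = α * a + (1 - α) * c) :
    0 ≤ α * f a * ((x - y) ^ k * (x - z) ^ k)
      + f b * ((y - z) ^ k * (y - x) ^ k)
      + (1 - α) * f c * ((z - x) ^ k * (z - y) ^ k) := by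
  have hxz : z ≤ x := hyz.trans hxy
  have hP : (0:ℝ) ≤ (x - y) ^ k := pow_nonneg (by linarith) k
  have hQ : (0:ℝ) ≤ (y - z) ^ k := pow_nonneg (by linarith) k
  have hR : (0:ℝ) ≤ (x - z) ^ k := pow_nonneg (by linarith) k
  have hPR : (x - y) ^ k ≤ (x - z) ^ k :=
    pow_le_pow_left₀ (by linarith) (by linarith) k
  have hQR : (y - z) ^ k ≤ (x - z) ^ k :=
    pow_le_pow_left₀ (by linarith) (by linarith) k
  -- third term rewrite
  have h3 : (z - x) ^ k * (z - y) ^ k = (x - z) ^ k * (y - z) ^ k := by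
    rw [← mul_pow, ← mul_pow]; ring_nf
  -- middle term lower bound
  have h2 : -((x - y) ^ k * (y - z) ^ k) ≤ (y - z) ^ k * (y - x) ^ k := by
    rcases Nat.even_or_odd k with hke | hko
    · have : (0:ℝ) ≤ (y - x) ^ k := hke.pow_nonneg _
      nlinarith [mul_nonneg hP hQ, mul_nonneg hQ this]
    · have : (y - x) ^ k = -((x - y) ^ k) := by
        rw [← neg_sub, hko.neg_pow]
      rw [this]; linarith [mul_comm ((x - y) ^ k) ((y - z) ^ k)]
  have hfa := hf0 a
  have hfc := hf0 c
  have hfb := hf0 b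
  have hconvb : f b ≤ α * f a + (1 - α) * f c := by
    have h := hconv.2 (Set.mem_univ a) (Set.mem_univ c) hα0 (sub_nonneg.2 hα1)
      (by ring : α + (1 - α) = 1)
    simp only [smul_eq_mul] at h
    rw [hb]; exact h
  have key : f b * ((x - y) ^ k * (y - z) ^ k)
      ≤ α * f a * ((x - y) ^ k * (x - z) ^ k)
        + (1 - α) * f c * ((x - z) ^ k * (y - z) ^ k) := by
    have h1 : f b * ((x - y) ^ k * (y - z) ^ k)
        ≤ (α * f a + (1 - α) * f c) * ((x - y) ^ k * (y - z) ^ k) := by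
      apply mul_le_mul_of_nonneg_right hconvb (mul_nonneg hP hQ)
    refine h1.trans ?_
    have ha' : α * f a * ((x - y) ^ k * (y - z) ^ k)
        ≤ α * f a * ((x - y) ^ k * (x - z) ^ k) := by
      apply mul_le_mul_of_nonneg_left _ (mul_nonneg hα0 hfa)
      exact mul_le_mul_of_nonneg_left hQR hP
    have hc' : (1 - α) * f c * ((x - y) ^ k * (y - z) ^ k)
        ≤ (1 - α) * f c * ((x - z) ^ k * (y - z) ^ k) := by
      apply mul_le_mul_of_nonneg_left _ (mul_nonneg (by linarith) hfc)
      exact mul_le_mul_of_nonneg_right hPR hQ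
    nlinarith [ha', hc']
  have h2' : f b * (-((x - y) ^ k * (y - z) ^ k)) ≤ f b * ((y - z) ^ k * (y - x) ^ k) :=
    mul_le_mul_of_nonneg_left h2 hfb
  rw [h3]
  nlinarith [key, h2']
end

section
/- Let R be a commutative ordered ring (a commutative ring equipped with a partial order ⪯ such that addition preserves the order and the product of two nonnegative elements is nonnegative). Let x, y, z, a, b, c ∈ R with x ⪰ y ⪰ z, a ⪰ 0, c ⪰ 0, a + c ⪰ b and a + c ⪰ −b, and let n ≥ 0 be an integer. Then a·(x−y)ⁿ·(x−z)ⁿ + b·(y−x)ⁿ·(y−z)ⁿ + c·(z−x)ⁿ·(z−y)ⁿ ⪰ 0. -/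
theorem stmt_14 {R : Type*} [CommRing R] [PartialOrder R]
    (hadd : ∀ u v w : R, u ≤ v → u + w ≤ v + w)
    (hmul : ∀ u v : R, 0 ≤ u → 0 ≤ v → 0 ≤ u * v)
    (x y z a b c : R) (hxy : y ≤ x) (hyz : z ≤ y)
    (ha : 0 ≤ a) (hc : 0 ≤ c) (hb1 : b ≤ a + c) (hb2 : -b ≤ a + c)
    (n : ℕ) :
    0 ≤ a * (x - y) ^ n * (x - z) ^ n + b * (y - x) ^ n * (y - z) ^ n
      + c * (z - x) ^ n * (z - y) ^ n := by
  have hadd0 : ∀ u v : R, 0 ≤ u → 0 ≤ v → 0 ≤ u + v := by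
    intro u v hu hv
    calc (0:R) ≤ v := hv
      _ = 0 + v := by ring
      _ ≤ u + v := hadd 0 u v hu
  have hsub : ∀ u v : R, u ≤ v → 0 ≤ v - u := by
    intro u v h
    simpa [sub_eq_add_neg] using hadd u v (-u) h
  set p := x - y with hp
  set q := y - z with hq
  have hp0 : 0 ≤ p := hsub y x hxy
  have hq0 : 0 ≤ q := hsub z y hyz
  have hpow : ∀ u : R, 0 ≤ u → ∀ m : ℕ, 0 ≤ u ^ (m + 1) := by
    intro u hu m
    induction m with
    | zero => simpa using hu
    | succ k ih => rw [pow_succ]; exact hmul _ _ ih hu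
  have hpowmono : ∀ u v : R, 0 ≤ u → u ≤ v → ∀ m : ℕ, 0 ≤ v ^ m - u ^ m := by
    intro u v hu huv m
    induction m with
    | zero => simp
    | succ k ih =>
      have hv : 0 ≤ v := le_trans hu huv
      have h1 : 0 ≤ v * (v ^ k - u ^ k) := hmul _ _ hv ih
      have h2 : 0 ≤ (v - u) * u ^ k := by
        cases k with
        | zero => simpa using hsub u v huv
        | succ j => exact hmul _ _ (hsub u v huv) (hpow u hu j)
      calc (0:R) ≤ v * (v ^ k - u ^ k) + (v - u) * u ^ k := hadd0 _ _ h1 h2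
        _ = v ^ (k + 1) - u ^ (k + 1) := by ring
  cases n with
  | zero =>
    have h : (0:R) ≤ a + c + b := by simpa using hadd (-b) (a + c) b hb2
    calc (0:R) ≤ a + c + b := h
      _ = a * p ^ 0 * (x - z) ^ 0 + b * (y - x) ^ 0 * q ^ 0
          + c * (z - x) ^ 0 * (z - y) ^ 0 := by ring
  | succ m =>
    have hs0 : 0 ≤ p + q := hadd0 _ _ hp0 hq0
    have hps : p ≤ p + q := by
      calc p = 0 + p := by ring
        _ ≤ q + p := hadd 0 q p hq0
        _ = p + q := by ring
    have hqs : q ≤ p + q := by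
      calc q = 0 + q := by ring
        _ ≤ p + q := hadd 0 p q hp0
    have key : ∀ d : R, -d ≤ a + c →
        0 ≤ a * (p ^ (m+1) * ((p+q) ^ (m+1) - q ^ (m+1)))
          + c * (q ^ (m+1) * ((p+q) ^ (m+1) - p ^ (m+1)))
          + (a + c + d) * (p ^ (m+1) * q ^ (m+1)) := by
      intro d hd
      have hacd : (0:R) ≤ a + c + d := by simpa using hadd (-d) (a + c) d hd
      have t1 : 0 ≤ a * (p ^ (m+1) * ((p+q) ^ (m+1) - q ^ (m+1))) :=
        hmul _ _ ha (hmul _ _ (hpow p hp0 m) (hpowmono q (p+q) hq0 hqs (m+1)))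
      have t2 : 0 ≤ c * (q ^ (m+1) * ((p+q) ^ (m+1) - p ^ (m+1))) :=
        hmul _ _ hc (hmul _ _ (hpow q hq0 m) (hpowmono p (p+q) hp0 hps (m+1)))
      have t3 : 0 ≤ (a + c + d) * (p ^ (m+1) * q ^ (m+1)) :=
        hmul _ _ hacd (hmul _ _ (hpow p hp0 m) (hpow q hq0 m))
      exact hadd0 _ _ (hadd0 _ _ t1 t2) t3
    rcases Nat.even_or_odd (m + 1) with he | ho
    · have e1 : (y - x) ^ (m+1) = p ^ (m+1) := by
        rw [show y - x = -p from by ring]; exact he.neg_pow p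
      have e2 : (z - x) ^ (m+1) = (p + q) ^ (m+1) := by
        rw [show z - x = -(p + q) from by ring]; exact he.neg_pow (p + q)
      have e3 : (z - y) ^ (m+1) = q ^ (m+1) := by
        rw [show z - y = -q from by ring]; exact he.neg_pow q
      rw [e1, e2, e3, show x - z = p + q from by ring]
      exact le_of_le_of_eq (key b hb2) (by ring)
    · have e1 : (y - x) ^ (m+1) = -(p ^ (m+1)) := by
        rw [show y - x = -p from by ring]; exact ho.neg_pow p
      have e2 : (z - x) ^ (m+1) = -((p + q) ^ (m+1)) := by
        rw [show z - x = -(p + q) from by ring]; exact ho.neg_pow (p + q)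
      have e3 : (z - y) ^ (m+1) = -(q ^ (m+1)) := by
        rw [show z - y = -q from by ring]; exact ho.neg_pow q
      rw [e1, e2, e3, show x - z = p + q from by ring]
      exact le_of_le_of_eq (key (-b) (by simpa using hb1)) (by ring)
end

section
/- Let A, B, C be pairwise commuting n × n complex Hermitian matrices with A ⪰ B ⪰ C in the Loewner order (i.e., A − B and B − C are positive semidefinite), and let a, b, c be real numbers with a ≥ 0, c ≥ 0 and a + c ≥ |b|. Then the matrix a·(A−B)(A−C) + b·(B−A)(B−C) + c·(C−A)(C−B) is positive semidefinite. -/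
/-!
Put `X = A - B` and `Y = B - C`. Expanding without using commutativity, the matrix equals
`a X² + (a + c - b) X Y + c Y²`. The three coefficients are nonnegative because `|b| ≤ a + c`,
and the three products are positive semidefinite since `X` and `Y` are commuting positive
semidefinite matrices, whose product is then nonnegative in the C⋆-algebra of matrices.
-/

open Matrix
open scoped ComplexOrder MatrixOrder

theorem Matrix.PosSemidef.mul_of_commute {n 𝕜 : Type*} [Fintype n] [DecidableEq n] [RCLike 𝕜]
    {X Y : Matrix n n 𝕜} (hX : X.PosSemidef) (hY : Y.PosSemidef) (h : Commute X Y) :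
    (X * Y).PosSemidef :=
  (h.mul_nonneg hX.nonneg hY.nonneg).posSemidef

theorem Matrix.PosSemidef.ofReal_smul {n : Type*} {X : Matrix n n ℂ} (hX : X.PosSemidef)
    {r : ℝ} (hr : 0 ≤ r) : ((r : ℂ) • X).PosSemidef :=
  hX.smul (Complex.zero_le_real.mpr hr)

theorem commute_sub_sub_of_commute {R : Type*} [Ring R] {A B C : R}
    (hAB : Commute A B) (hAC : Commute A C) (hBC : Commute B C) :
    Commute (A - B) (B - C) :=
  (hAB.sub_left (.refl B)).sub_right (hAC.sub_left hBC)

theorem stmt_18_general {n : ℕ} (A B C : Matrix (Fin n) (Fin n) ℂ)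
    (hABc : A * B = B * A) (hACc : A * C = C * A) (hBCc : B * C = C * B)
    (hAB : (A - B).PosSemidef) (hBC : (B - C).PosSemidef)
    (a b c : ℝ) (ha : 0 ≤ a) (hc : 0 ≤ c) (hb : |b| ≤ a + c) :
    ((a : ℂ) • ((A - B) * (A - C)) + (b : ℂ) • ((B - A) * (B - C))
      + (c : ℂ) • ((C - A) * (C - B))).PosSemidef := by
  have hXY : Commute (A - B) (B - C) := commute_sub_sub_of_commute hABc hACc hBCc
  have hcoeff : 0 ≤ a + c - b := by linarith [le_abs_self b]
  have hexpand : (a : ℂ) • ((A - B) * (A - C)) + (b : ℂ) • ((B - A) * (B - C))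
      + (c : ℂ) • ((C - A) * (C - B))
      = (a : ℂ) • ((A - B) * (A - B)) + ((a + c - b : ℝ) : ℂ) • ((A - B) * (B - C))
        + (c : ℂ) • ((B - C) * (B - C)) := by
    simp only [sub_mul, mul_sub, smul_sub]
    push_cast
    module
  rw [hexpand]
  exact ((hAB.mul_of_commute hAB (.refl _)).ofReal_smul ha |>.add
    ((hAB.mul_of_commute hBC hXY).ofReal_smul hcoeff)).add
    ((hBC.mul_of_commute hBC (.refl _)).ofReal_smul hc)

theorem stmt_18 {n : ℕ} (A B C : Matrix (Fin n) (Fin n) ℂ)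
    (hA : A.IsHermitian) (hB : B.IsHermitian) (hC : C.IsHermitian)
    (hABc : A * B = B * A) (hACc : A * C = C * A) (hBCc : B * C = C * B)
    (hAB : (A - B).PosSemidef) (hBC : (B - C).PosSemidef)
    (a b c : ℝ) (ha : 0 ≤ a) (hc : 0 ≤ c) (hb : |b| ≤ a + c) :
    ((a : ℂ) • ((A - B) * (A - C)) + (b : ℂ) • ((B - A) * (B - C))
      + (c : ℂ) • ((C - A) * (C - B))).PosSemidef :=
  stmt_18_general A B C hABc hACc hBCc hAB hBC a b c ha hc hb
end

section
/- Let R be a commutative ordered ring (a commutative ring equipped with a partial order ⪯ such that addition preserves the order and the product of two nonnegative elements is nonnegative). Let x₁ ⪰ x₂ ⪰ x₃ ⪰ x₄ be elements of R with x₁ + x₄ ⪰ x₂ + x₃, let n ≥ 0 be an integer, and let a₁, a₂, a₃, a₄, â₂, â₄ ∈ R be such that â₂ ⪰ a₂, â₂ ⪰ −a₂, â₄ ⪰ a₄, â₄ ⪰ −a₄, and a₁ ⪰ â₂ ⪰ a₃ ⪰ â₄ ⪰ 0. Then ∑_{i=1}^{4} a_i · ∏_{j ≠ i} (x_i − x_j)ⁿ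 ⪰ 0. -/
section Aux

variable {R : Type*} [CommRing R] [PartialOrder R]

private lemma aux_sub (hadd : ∀ u v w : R, u ≤ v → u + w ≤ v + w) {u v : R} :
    u ≤ v ↔ 0 ≤ v - u := by
  constructor
  · intro h
    have := hadd u v (-u) h
    simpa [sub_eq_add_neg] using this
  · intro h
    have := hadd 0 (v - u) u h
    simpa using this

private lemma aux_nn_add (hadd : ∀ u v w : R, u ≤ v → u + w ≤ v + w) {a b : R}
    (haa : 0 ≤ a) (hbb : 0 ≤ b) : 0 ≤ a + b := by
  have h1 := hadd 0 a b haa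
  calc (0:R) ≤ b := hbb
    _ = 0 + b := by ring
    _ ≤ a + b := h1

private lemma aux_add4 (hadd : ∀ u v w : R, u ≤ v → u + w ≤ v + w) {a b c d : R}
    (h1 : a ≤ b) (h2 : c ≤ d) : a + c ≤ b + d := by
  have k1 := hadd a b c h1
  have k2 := hadd c d b h2
  calc a + c ≤ b + c := k1
    _ = c + b := by ring
    _ ≤ d + b := k2
    _ = b + d := by ring

private lemma aux_neg_flip (hadd : ∀ u v w : R, u ≤ v → u + w ≤ v + w) {a b : R}
    (h : a ≤ b) : -b ≤ -a := by
  rw [aux_sub hadd]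
  rw [show -a - -b = b - a by ring]
  exact (aux_sub hadd).mp h

private lemma aux_mulr (hadd : ∀ u v w : R, u ≤ v → u + w ≤ v + w)
    (hmul : ∀ u v : R, 0 ≤ u → 0 ≤ v → 0 ≤ u * v) {c d q : R}
    (h : c ≤ d) (hq : 0 ≤ q) : c * q ≤ d * q := by
  rw [aux_sub hadd]
  have := hmul (d - c) q ((aux_sub hadd).mp h) hq
  rw [show d * q - c * q = (d - c) * q by ring]
  exact this

private lemma aux_mul4 (hadd : ∀ u v w : R, u ≤ v → u + w ≤ v + w)
    (hmul : ∀ u v : R, 0 ≤ u → 0 ≤ v → 0 ≤ u * v) {a b c d : R}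
    (haa : 0 ≤ a) (hab : a ≤ b) (hcc : 0 ≤ c) (hcd : c ≤ d) : a * c ≤ b * d := by
  have hd : 0 ≤ d := le_trans hcc hcd
  have h1 := hmul (b - a) d ((aux_sub hadd).mp hab) hd
  have h2 := hmul a (d - c) haa ((aux_sub hadd).mp hcd)
  rw [aux_sub hadd]
  rw [show b * d - a * c = (b - a) * d + a * (d - c) by ring]
  exact aux_nn_add hadd h1 h2

private lemma aux_pow (hadd : ∀ u v w : R, u ≤ v → u + w ≤ v + w)
    (hmul : ∀ u v : R, 0 ≤ u → 0 ≤ v → 0 ≤ u * v) {a b : R} (m : ℕ)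
    (haa : 0 ≤ a) (hab : a ≤ b) : 0 ≤ a ^ (m + 1) ∧ a ^ (m + 1) ≤ b ^ (m + 1) := by
  induction m with
  | zero => simpa using ⟨haa, hab⟩
  | succ k ih =>
    constructor
    · rw [pow_succ]
      exact hmul _ _ ih.1 haa
    · rw [pow_succ a, pow_succ b]
      exact aux_mul4 hadd hmul ih.1 ih.2 haa hab

private lemma aux_core (hadd : ∀ u v w : R, u ≤ v → u + w ≤ v + w)
    (hmul : ∀ u v : R, 0 ≤ u → 0 ≤ v → 0 ≤ u * v)
    {a1 b2 a3 b4 ha2 ha4 q1 q2 q3 q4 : R}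
    (hb2l : -ha2 ≤ b2) (hb4l : -ha4 ≤ b4)
    (h1 : ha2 ≤ a1) (h3l : ha4 ≤ a3) (h24 : ha4 ≤ ha2) (h4 : 0 ≤ ha4)
    (hq1 : 0 ≤ q1) (hq2 : 0 ≤ q2) (hq3 : 0 ≤ q3) (hq4 : 0 ≤ q4)
    (hk1 : q2 ≤ q1) (hk2 : q4 - q3 ≤ q1 - q2) (hk3 : q3 ≤ q4) :
    0 ≤ a1 * q1 + b2 * q2 + a3 * q3 + b4 * q4 := by
  have s1 : ha2 * q1 ≤ a1 * q1 := aux_mulr hadd hmul h1 hq1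
  have s2 : -ha2 * q2 ≤ b2 * q2 := aux_mulr hadd hmul hb2l hq2
  have s3 : ha4 * q3 ≤ a3 * q3 := aux_mulr hadd hmul h3l hq3
  have s4 : -ha4 * q4 ≤ b4 * q4 := aux_mulr hadd hmul hb4l hq4
  have hsum : ha2 * q1 + -ha2 * q2 + ha4 * q3 + -ha4 * q4
      ≤ a1 * q1 + b2 * q2 + a3 * q3 + b4 * q4 :=
    aux_add4 hadd (aux_add4 hadd (aux_add4 hadd s1 s2) s3) s4
  have t1 : ha4 * (q4 - q3) ≤ ha4 * (q1 - q2) :=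
    aux_mul4 hadd hmul h4 le_rfl ((aux_sub hadd).mp hk3) hk2
  have t2 : ha4 * (q1 - q2) ≤ ha2 * (q1 - q2) :=
    aux_mulr hadd hmul h24 ((aux_sub hadd).mp hk1)
  have t3 : 0 ≤ ha2 * (q1 - q2) - ha4 * (q4 - q3) :=
    (aux_sub hadd).mp (le_trans t1 t2)
  have t4 : 0 ≤ ha2 * q1 + -ha2 * q2 + ha4 * q3 + -ha4 * q4 := by
    rw [show ha2 * q1 + -ha2 * q2 + ha4 * q3 + -ha4 * q4
        = ha2 * (q1 - q2) - ha4 * (q4 - q3) by ring]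
    exact t3
  exact le_trans t4 hsum

end Aux

theorem stmt_19 {R : Type*} [CommRing R] [PartialOrder R]
    (hadd : ∀ u v w : R, u ≤ v → u + w ≤ v + w)
    (hmul : ∀ u v : R, 0 ≤ u → 0 ≤ v → 0 ≤ u * v)
    (x1 x2 x3 x4 : R) (h12 : x2 ≤ x1) (h23 : x3 ≤ x2) (h34 : x4 ≤ x3)
    (hsum : x2 + x3 ≤ x1 + x4) (n : ℕ)
    (a1 a2 a3 a4 ha2 ha4 : R)
    (h2a : a2 ≤ ha2) (h2b : -a2 ≤ ha2) (h4a : a4 ≤ ha4) (h4b : -a4 ≤ ha4)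
    (hchain1 : ha2 ≤ a1) (hchain2 : a3 ≤ ha2) (hchain3 : ha4 ≤ a3)
    (hchain4 : 0 ≤ ha4) :
    0 ≤ a1 * ((x1 - x2) ^ n * (x1 - x3) ^ n * (x1 - x4) ^ n)
      + a2 * ((x2 - x1) ^ n * (x2 - x3) ^ n * (x2 - x4) ^ n)
      + a3 * ((x3 - x1) ^ n * (x3 - x2) ^ n * (x3 - x4) ^ n)
      + a4 * ((x4 - x1) ^ n * (x4 - x2) ^ n * (x4 - x3) ^ n) := by
  have hn2 : -ha2 ≤ a2 := by simpa using aux_neg_flip hadd h2b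
  have hn4 : -ha4 ≤ a4 := by simpa using aux_neg_flip hadd h4b
  have h24 : ha4 ≤ ha2 := le_trans hchain3 hchain2
  cases n with
  | zero =>
    simp only [pow_zero, mul_one, one_mul]
    have e1 : ha2 + -ha2 ≤ a1 + a2 := aux_add4 hadd hchain1 hn2
    have e2 : ha4 + -ha4 ≤ a3 + a4 := aux_add4 hadd hchain3 hn4
    have e3 : (ha2 + -ha2) + (ha4 + -ha4) ≤ (a1 + a2) + (a3 + a4) := aux_add4 hadd e1 e2
    calc (0:R) = (ha2 + -ha2) + (ha4 + -ha4) := by ring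
      _ ≤ (a1 + a2) + (a3 + a4) := e3
      _ = a1 + a2 + a3 + a4 := by ring
  | succ m =>
    -- nonneg differences
    have d12 : 0 ≤ x1 - x2 := (aux_sub hadd).mp h12
    have d23 : 0 ≤ x2 - x3 := (aux_sub hadd).mp h23
    have d34 : 0 ≤ x3 - x4 := (aux_sub hadd).mp h34
    have d13 : 0 ≤ x1 - x3 := by
      have := aux_nn_add hadd d12 d23
      rwa [show x1 - x2 + (x2 - x3) = x1 - x3 by ring] at this
    have d24 : 0 ≤ x2 - x4 := by
      have := aux_nn_add hadd d23 d34
      rwa [show x2 - x3 + (x3 - x4) = x2 - x4 by ring] at this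
    have d14 : 0 ≤ x1 - x4 := by
      have := aux_nn_add hadd d12 d24
      rwa [show x1 - x2 + (x2 - x4) = x1 - x4 by ring] at this
    set p12 := (x1 - x2) ^ (m + 1) with hp12
    set p13 := (x1 - x3) ^ (m + 1) with hp13
    set p14 := (x1 - x4) ^ (m + 1) with hp14
    set p23 := (x2 - x3) ^ (m + 1) with hp23
    set p24 := (x2 - x4) ^ (m + 1) with hp24
    set p34 := (x3 - x4) ^ (m + 1) with hp34
    have np12 : 0 ≤ p12 := (aux_pow hadd hmul m d12 le_rfl).1
    have np13 : 0 ≤ p13 := (aux_pow hadd hmul m d13 le_rfl).1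
    have np14 : 0 ≤ p14 := (aux_pow hadd hmul m d14 le_rfl).1
    have np23 : 0 ≤ p23 := (aux_pow hadd hmul m d23 le_rfl).1
    have np24 : 0 ≤ p24 := (aux_pow hadd hmul m d24 le_rfl).1
    have np34 : 0 ≤ p34 := (aux_pow hadd hmul m d34 le_rfl).1
    -- monotone comparisons between the powers
    have m2313 : p23 ≤ p13 := by
      refine (aux_pow hadd hmul m d23 ?_).2
      rw [aux_sub hadd]; rw [show x1 - x3 - (x2 - x3) = x1 - x2 by ring]; exact d12
    have m2414 : p24 ≤ p14 := by
      refine (aux_pow hadd hmul m d24 ?_).2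
      rw [aux_sub hadd]; rw [show x1 - x4 - (x2 - x4) = x1 - x2 by ring]; exact d12
    have m2324 : p23 ≤ p24 := by
      refine (aux_pow hadd hmul m d23 ?_).2
      rw [aux_sub hadd]; rw [show x2 - x4 - (x2 - x3) = x3 - x4 by ring]; exact d34
    have m1314 : p13 ≤ p14 := by
      refine (aux_pow hadd hmul m d13 ?_).2
      rw [aux_sub hadd]; rw [show x1 - x4 - (x1 - x3) = x3 - x4 by ring]; exact d34
    have m2413 : p24 ≤ p13 := by
      refine (aux_pow hadd hmul m d24 ?_).2
      rw [aux_sub hadd]; rw [show x1 - x3 - (x2 - x4) = x1 + x4 - (x2 + x3) by ring]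
      exact (aux_sub hadd).mp hsum
    have m3412 : p34 ≤ p12 := by
      refine (aux_pow hadd hmul m d34 ?_).2
      rw [aux_sub hadd]; rw [show x1 - x2 - (x3 - x4) = x1 + x4 - (x2 + x3) by ring]
      exact (aux_sub hadd).mp hsum
    -- the q's
    have hq1 : 0 ≤ p12 * p13 * p14 := hmul _ _ (hmul _ _ np12 np13) np14
    have hq2 : 0 ≤ p12 * p23 * p24 := hmul _ _ (hmul _ _ np12 np23) np24
    have hq3 : 0 ≤ p13 * p23 * p34 := hmul _ _ (hmul _ _ np13 np23) np34
    have hq4 : 0 ≤ p14 * p24 * p34 := hmul _ _ (hmul _ _ np14 np24) np34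
    have hAB : p23 * p24 ≤ p13 * p14 := aux_mul4 hadd hmul np23 m2313 np24 m2414
    have hCD : p13 * p23 ≤ p14 * p24 := aux_mul4 hadd hmul np13 m1314 np23 m2324
    have hk1 : p12 * p23 * p24 ≤ p12 * p13 * p14 := by
      rw [show p12 * p23 * p24 = p12 * (p23 * p24) by ring,
        show p12 * p13 * p14 = p12 * (p13 * p14) by ring]
      exact aux_mul4 hadd hmul np12 le_rfl (hmul _ _ np23 np24) hAB
    have hk3 : p13 * p23 * p34 ≤ p14 * p24 * p34 :=
      aux_mulr hadd hmul hCD np34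
    have hDCAB : p14 * p24 - p13 * p23 ≤ p13 * p14 - p23 * p24 := by
      rw [aux_sub hadd]
      have := hmul (p13 - p24) (p14 + p23) ((aux_sub hadd).mp m2413)
        (aux_nn_add hadd np14 np23)
      rwa [show (p13 - p24) * (p14 + p23)
          = p13 * p14 - p23 * p24 - (p14 * p24 - p13 * p23) by ring] at this
    have hk2 : p14 * p24 * p34 - p13 * p23 * p34
        ≤ p12 * p13 * p14 - p12 * p23 * p24 := by
      have h0 : p34 * (p14 * p24 - p13 * p23) ≤ p12 * (p13 * p14 - p23 * p24) :=
        aux_mul4 hadd hmul np34 m3412 ((aux_sub hadd).mp hCD) hDCAB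
      rw [aux_sub hadd]
      rw [show p12 * p13 * p14 - p12 * p23 * p24 - (p14 * p24 * p34 - p13 * p23 * p34)
          = p12 * (p13 * p14 - p23 * p24) - p34 * (p14 * p24 - p13 * p23) by ring]
      exact (aux_sub hadd).mp h0
    rcases Nat.even_or_odd (m + 1) with hev | hod
    · have r1 : (x2 - x1) ^ (m+1) = p12 := by
        rw [show x2 - x1 = -(x1 - x2) by ring, hev.neg_pow]
      have r2 : (x3 - x1) ^ (m+1) = p13 := by
        rw [show x3 - x1 = -(x1 - x3) by ring, hev.neg_pow]
      have r3 : (x3 - x2) ^ (m+1) = p23 := by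
        rw [show x3 - x2 = -(x2 - x3) by ring, hev.neg_pow]
      have r4 : (x4 - x1) ^ (m+1) = p14 := by
        rw [show x4 - x1 = -(x1 - x4) by ring, hev.neg_pow]
      have r5 : (x4 - x2) ^ (m+1) = p24 := by
        rw [show x4 - x2 = -(x2 - x4) by ring, hev.neg_pow]
      have r6 : (x4 - x3) ^ (m+1) = p34 := by
        rw [show x4 - x3 = -(x3 - x4) by ring, hev.neg_pow]
      rw [r1, r2, r3, r4, r5, r6]
      have := aux_core hadd hmul hn2 hn4 hchain1 hchain3 h24 hchain4
        hq1 hq2 hq3 hq4 hk1 hk2 hk3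
      calc (0:R) ≤ a1 * (p12 * p13 * p14) + a2 * (p12 * p23 * p24)
            + a3 * (p13 * p23 * p34) + a4 * (p14 * p24 * p34) := this
        _ = a1 * (p12 * p13 * p14) + a2 * (p12 * p23 * p24)
            + a3 * (p13 * p23 * p34) + a4 * (p14 * p24 * p34) := by ring
    · have r1 : (x2 - x1) ^ (m+1) = -p12 := by
        rw [show x2 - x1 = -(x1 - x2) by ring, hod.neg_pow]
      have r2 : (x3 - x1) ^ (m+1) = -p13 := by
        rw [show x3 - x1 = -(x1 - x3) by ring, hod.neg_pow]
      have r3 : (x3 - x2) ^ (m+1) = -p23 := by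
        rw [show x3 - x2 = -(x2 - x3) by ring, hod.neg_pow]
      have r4 : (x4 - x1) ^ (m+1) = -p14 := by
        rw [show x4 - x1 = -(x1 - x4) by ring, hod.neg_pow]
      have r5 : (x4 - x2) ^ (m+1) = -p24 := by
        rw [show x4 - x2 = -(x2 - x4) by ring, hod.neg_pow]
      have r6 : (x4 - x3) ^ (m+1) = -p34 := by
        rw [show x4 - x3 = -(x3 - x4) by ring, hod.neg_pow]
      rw [r1, r2, r3, r4, r5, r6]
      have hb2 : -ha2 ≤ -a2 := aux_neg_flip hadd h2a
      have hb4 : -ha4 ≤ -a4 := aux_neg_flip hadd h4a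
      have := aux_core hadd hmul hb2 hb4 hchain1 hchain3 h24 hchain4
        hq1 hq2 hq3 hq4 hk1 hk2 hk3
      calc (0:R) ≤ a1 * (p12 * p13 * p14) + -a2 * (p12 * p23 * p24)
            + a3 * (p13 * p23 * p34) + -a4 * (p14 * p24 * p34) := this
        _ = a1 * (p12 * p13 * p14) + a2 * (-p12 * p23 * p24)
            + a3 * (-p13 * -p23 * p34) + a4 * (-p14 * -p24 * -p34) := by ring
end
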